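/- arXiv:2007.12754 — 8 statements merged into one kernel-verified Lean document; each statement's English description precedes it below -/
import Mathlib

section
/- Let A ∈ ℝ^{n×n} be SPD, M ∈ ℝ^{n×n} nonsingular with M + Mᵀ − A SPD, P ∈ ℝ^{n×n_c} of full column rank, A_c := PᵀAP, and B_c ∈ ℝ^{n_c×n_c} SPD. Define M̄ := M(M+Mᵀ−A)^{-1}Mᵀ, M̃ := Mᵀ(M+Mᵀ−A)^{-1}M, and let B_ITG be the SPD matrix defined by B_ITG^{-1} = M̄^{-1} + (I−M^{-T}A)P B_c^{-1} Pᵀ(I−AM^{-1}). Then B_ITG = A + (I−AM^{-T}) M̃ (I − P(PᵀM̃P + B_c − A_c)^{-1} Pᵀ M̃)(I − M^{-1}A). -/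
/-!
With `X = M + Mᵀ - A`, the defining formula for `B_ITG⁻¹` is a low-rank update of `M̄⁻¹`, so
the Woodbury identity inverts it. Everything then rests on the two identities
`M X⁻¹ (X - M) = (X - M) X⁻¹ M` and `(X - M) X⁻¹ (X - Mᵀ) = M X⁻¹ Mᵀ - A`. They give
`(I - A M⁻¹) M̄ (I - M⁻ᵀ A) = M̃ - A`, so the Woodbury capacitance matrix is
`B_c + Pᵀ (M̃ - A) P = Pᵀ M̃ P + B_c - A_c`; they move the outer factors across,
`M̄ (I - M⁻ᵀ A) = (I - A M⁻ᵀ) M̃`; and they give `A + (I - A M⁻ᵀ) M̃ (I - M⁻¹ A) = M̄`.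
The capacitance matrix is invertible because `M̃ - A = (Mᵀ - A)ᵀ X⁻¹ (Mᵀ - A)` is
positive semidefinite.
-/

namespace Matrix

variable {n m R : Type*} [Fintype n] [DecidableEq n] [CommRing R]

theorem isUnit_add_mul_mul [Fintype m] [DecidableEq m] {A : Matrix n n R} {U : Matrix n m R}
    {C : Matrix m m R} {V : Matrix m n R} (hA : IsUnit A) (hC : IsUnit C)
    (hAC : IsUnit (C⁻¹ + V * A⁻¹ * U)) : IsUnit (A + U * C * V) := by
  obtain ⟨_⟩ := hA.nonempty_invertible
  obtain ⟨_⟩ := hC.nonempty_invertible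
  obtain ⟨iAC⟩ := hAC.nonempty_invertible
  simp only [← invOf_eq_nonsing_inv] at iAC
  exact @isUnit_of_invertible _ _ _ (invertibleAddMulMul A U C V)

theorem mul_nonsing_inv_mul_sub_comm {X : Matrix n n R} (hX : IsUnit X.det) (M : Matrix n n R) :
    M * X⁻¹ * (X - M) = (X - M) * X⁻¹ * M := by
  rw [mul_sub, sub_mul, nonsing_inv_mul_cancel_right _ _ hX, sub_mul, mul_nonsing_inv _ hX,
    one_mul]

theorem sub_mul_nonsing_inv_mul_sub {X : Matrix n n R} (hX : IsUnit X.det) (M N : Matrix n n R) :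
    (X - M) * X⁻¹ * (X - N) = M * X⁻¹ * N - (M + N - X) := by
  rw [mul_sub, sub_mul, sub_mul, nonsing_inv_mul_cancel_right _ _ hX, mul_nonsing_inv _ hX,
    sub_mul, one_mul, nonsing_inv_mul_cancel_right _ _ hX]
  abel

variable {A M : Matrix n n R}

theorem one_sub_mul_nonsing_inv_mul (hM : IsUnit M.det) : (1 - A * M⁻¹) * M = M - A := by
  rw [sub_mul, one_mul, nonsing_inv_mul_cancel_right _ _ hM]

theorem mul_one_sub_nonsing_inv_mul (hM : IsUnit M.det) : M * (1 - M⁻¹ * A) = M - A := by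
  rw [mul_sub, mul_one, mul_nonsing_inv_cancel_left _ _ hM]

variable (A M N : Matrix n n R)

/-- `symmSmoother A M Mᵀ` is the paper's `M̄` and `symmSmoother A Mᵀ M` its `M̃`. -/
noncomputable def symmSmoother : Matrix n n R := M * (M + N - A)⁻¹ * N

variable {A M N}

theorem symmSmoother_swap_eq : symmSmoother A N M = N * (M + N - A)⁻¹ * M := by
  rw [symmSmoother, add_comm N M]

theorem symmSmoother_swap_sub (hX : IsUnit (M + N - A).det) :
    symmSmoother A N M - A = (M - A) * (M + N - A)⁻¹ * (N - A) := by
  have hM : M - A = (M + N - A) - N := by abel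
  have hN : N - A = (M + N - A) - M := by abel
  rw [hM, hN, sub_mul_nonsing_inv_mul_sub hX, symmSmoother_swap_eq]
  abel

theorem symmSmoother_mul_one_sub_nonsing_inv_mul (hN : IsUnit N.det)
    (hX : IsUnit (M + N - A).det) :
    symmSmoother A M N * (1 - N⁻¹ * A) = (1 - A * N⁻¹) * symmSmoother A N M := by
  have hN' : N - A = (M + N - A) - M := by abel
  rw [symmSmoother, symmSmoother_swap_eq, Matrix.mul_assoc, mul_one_sub_nonsing_inv_mul hN,
    ← Matrix.mul_assoc, ← Matrix.mul_assoc, one_sub_mul_nonsing_inv_mul hN, hN',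
    mul_nonsing_inv_mul_sub_comm hX]

theorem one_sub_mul_nonsing_inv_mul_symmSmoother_mul (hM : IsUnit M.det) (hN : IsUnit N.det)
    (hX : IsUnit (M + N - A).det) :
    (1 - A * M⁻¹) * symmSmoother A M N * (1 - N⁻¹ * A) = symmSmoother A N M - A := by
  rw [symmSmoother_swap_sub hX, symmSmoother, ← Matrix.mul_assoc, ← Matrix.mul_assoc,
    one_sub_mul_nonsing_inv_mul hM, Matrix.mul_assoc _ N, mul_one_sub_nonsing_inv_mul hN]

theorem isUnit_symmSmoother (hM : IsUnit M.det) (hN : IsUnit N.det)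
    (hX : IsUnit (M + N - A).det) : IsUnit (symmSmoother A M N) := by
  rw [isUnit_iff_isUnit_det, symmSmoother, det_mul, det_mul]
  exact (hM.mul (isUnit_nonsing_inv_det _ hX)).mul hN

section Coarse

variable [Fintype m] [DecidableEq m] {P : Matrix n m R} {Bc : Matrix m m R}

/-- The capacitance matrix of the Woodbury identity for `B_ITG⁻¹`. -/
theorem inv_inv_add_mul_inv_inv_symmSmoother_mul (hM : IsUnit M.det) (hN : IsUnit N.det)
    (hX : IsUnit (M + N - A).det) (hBc : IsUnit Bc.det) :
    Bc⁻¹⁻¹ + Pᵀ * (1 - A * M⁻¹) * (symmSmoother A M N)⁻¹⁻¹ * ((1 - N⁻¹ * A) * P)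
      = Pᵀ * symmSmoother A N M * P + Bc - Pᵀ * A * P := by
  rw [nonsing_inv_nonsing_inv _ hBc,
    nonsing_inv_nonsing_inv _ ((isUnit_iff_isUnit_det _).mp (isUnit_symmSmoother hM hN hX)),
    show Pᵀ * (1 - A * M⁻¹) * symmSmoother A M N * ((1 - N⁻¹ * A) * P)
      = Pᵀ * ((1 - A * M⁻¹) * symmSmoother A M N * (1 - N⁻¹ * A)) * P by
        simp only [Matrix.mul_assoc],
    one_sub_mul_nonsing_inv_mul_symmSmoother_mul hM hN hX]
  simp only [Matrix.mul_sub, Matrix.sub_mul]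
  abel

theorem isUnit_inv_symmSmoother_add (hM : IsUnit M.det) (hN : IsUnit N.det)
    (hX : IsUnit (M + N - A).det) (hBc : IsUnit Bc.det)
    (hS : IsUnit (Pᵀ * symmSmoother A N M * P + Bc - Pᵀ * A * P)) :
    IsUnit ((symmSmoother A M N)⁻¹ + (1 - N⁻¹ * A) * P * Bc⁻¹ * Pᵀ * (1 - A * M⁻¹)) := by
  simp only [Matrix.mul_assoc ((1 - N⁻¹ * A) * P * Bc⁻¹)]
  refine isUnit_add_mul_mul (isUnit_nonsing_inv_iff.mpr (isUnit_symmSmoother hM hN hX))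
    (isUnit_nonsing_inv_iff.mpr ((isUnit_iff_isUnit_det _).mpr hBc)) ?_
  rwa [inv_inv_add_mul_inv_inv_symmSmoother_mul hM hN hX hBc]

theorem inv_symmSmoother_add_eq (hM : IsUnit M.det) (hN : IsUnit N.det)
    (hX : IsUnit (M + N - A).det) (hBc : IsUnit Bc.det)
    (hS : IsUnit (Pᵀ * symmSmoother A N M * P + Bc - Pᵀ * A * P)) :
    ((symmSmoother A M N)⁻¹ + (1 - N⁻¹ * A) * P * Bc⁻¹ * Pᵀ * (1 - A * M⁻¹))⁻¹
      = A + (1 - A * N⁻¹) * symmSmoother A N M *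
        (1 - P * (Pᵀ * symmSmoother A N M * P + Bc - Pᵀ * A * P)⁻¹ * Pᵀ * symmSmoother A N M) *
          (1 - M⁻¹ * A) := by
  set S := Pᵀ * symmSmoother A N M * P + Bc - Pᵀ * A * P
  have hX' : IsUnit (N + M - A).det := by rwa [add_comm N M]
  have hMbar := isUnit_symmSmoother hM hN hX
  have hU : symmSmoother A M N * ((1 - N⁻¹ * A) * P)
      = (1 - A * N⁻¹) * symmSmoother A N M * P := by
    rw [← Matrix.mul_assoc, symmSmoother_mul_one_sub_nonsing_inv_mul hN hX]
  have hV : Pᵀ * (1 - A * M⁻¹) * symmSmoother A M N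
      = Pᵀ * symmSmoother A N M * (1 - M⁻¹ * A) := by
    rw [Matrix.mul_assoc, Matrix.mul_assoc, ← symmSmoother_mul_one_sub_nonsing_inv_mul hM hX']
  have hA_add :
      A + (1 - A * N⁻¹) * symmSmoother A N M * (1 - M⁻¹ * A) = symmSmoother A M N := by
    rw [one_sub_mul_nonsing_inv_mul_symmSmoother_mul hN hM hX', add_sub_cancel]
  simp only [Matrix.mul_assoc ((1 - N⁻¹ * A) * P * Bc⁻¹)]
  rw [add_mul_mul_inv_eq_sub _ _ _ _ (isUnit_nonsing_inv_iff.mpr hMbar)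
      (isUnit_nonsing_inv_iff.mpr ((isUnit_iff_isUnit_det _).mpr hBc)) (by
        rwa [inv_inv_add_mul_inv_inv_symmSmoother_mul hM hN hX hBc]),
    inv_inv_add_mul_inv_inv_symmSmoother_mul hM hN hX hBc,
    nonsing_inv_nonsing_inv _ ((isUnit_iff_isUnit_det _).mp hMbar)]
  calc _ = symmSmoother A M N - symmSmoother A M N * ((1 - N⁻¹ * A) * P) * S⁻¹ *
        (Pᵀ * (1 - A * M⁻¹) * symmSmoother A M N) := by simp only [S, Matrix.mul_assoc]
    _ = _ := by
      rw [hU, hV, ← hA_add]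
      simp only [Matrix.mul_sub, Matrix.sub_mul, Matrix.mul_one, Matrix.mul_assoc]
      abel

end Coarse

section Real

variable {A M : Matrix n n ℝ}

theorem posSemidef_symmSmoother_transpose_sub (hX : (M + Mᵀ - A).PosDef) :
    (symmSmoother A Mᵀ M - A).PosSemidef := by
  have hAt : Aᵀ = A := by
    have h := hX.isHermitian.eq
    rw [conjTranspose_eq_transpose_of_trivial, transpose_sub, transpose_add,
      transpose_transpose, add_comm Mᵀ M] at h
    exact sub_right_injective h
  have hQ : M - A = (Mᵀ - A)ᵀ := by rw [transpose_sub, transpose_transpose, hAt]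
  rw [symmSmoother_swap_sub ((isUnit_iff_isUnit_det _).mp hX.isUnit), hQ]
  simpa only [conjTranspose_eq_transpose_of_trivial] using
    hX.inv.posSemidef.conjTranspose_mul_mul_same (Mᵀ - A)

theorem posDef_transpose_mul_symmSmoother_mul_add_sub [Fintype m] {P : Matrix n m ℝ}
    {Bc : Matrix m m ℝ} (hX : (M + Mᵀ - A).PosDef) (hBc : Bc.PosDef) :
    (Pᵀ * symmSmoother A Mᵀ M * P + Bc - Pᵀ * A * P).PosDef := by
  have h : Pᵀ * symmSmoother A Mᵀ M * P + Bc - Pᵀ * A * P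
      = Bc + Pᵀ * (symmSmoother A Mᵀ M - A) * P := by
    simp only [Matrix.mul_sub, Matrix.sub_mul]
    abel
  rw [h]
  refine hBc.add_posSemidef ?_
  simpa only [conjTranspose_eq_transpose_of_trivial] using
    (posSemidef_symmSmoother_transpose_sub hX).conjTranspose_mul_mul_same P

end Real

end Matrix

open Matrix

theorem stmt_0_general {n nc : ℕ}
    (A M : Matrix (Fin n) (Fin n) ℝ)
    (P : Matrix (Fin n) (Fin nc) ℝ)
    (Bc : Matrix (Fin nc) (Fin nc) ℝ)
    (hM : IsUnit M.det)
    (hMMA : (M + Mᵀ - A).PosDef)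
    (hBc : Bc.PosDef)
    (Mbar Mtil : Matrix (Fin n) (Fin n) ℝ)
    (hMbar : Mbar = M * (M + Mᵀ - A)⁻¹ * Mᵀ)
    (hMtil : Mtil = Mᵀ * (M + Mᵀ - A)⁻¹ * M)
    (Ac : Matrix (Fin nc) (Fin nc) ℝ) (hAc : Ac = Pᵀ * A * P)
    (BITG : Matrix (Fin n) (Fin n) ℝ)
    (hBITGinv : BITG⁻¹ = Mbar⁻¹ + (1 - Mᵀ⁻¹ * A) * P * Bc⁻¹ * Pᵀ * (1 - A * M⁻¹)) :
    BITG = A + (1 - A * Mᵀ⁻¹) * Mtil *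
      (1 - P * (Pᵀ * Mtil * P + Bc - Ac)⁻¹ * Pᵀ * Mtil) * (1 - M⁻¹ * A) := by
  have hX : IsUnit (M + Mᵀ - A).det := (isUnit_iff_isUnit_det _).mp hMMA.isUnit
  have hMt : IsUnit Mᵀ.det := by rwa [det_transpose]
  have hBc' : IsUnit Bc.det := (isUnit_iff_isUnit_det _).mp hBc.isUnit
  have hS := (posDef_transpose_mul_symmSmoother_mul_add_sub (P := P) hMMA hBc).isUnit
  rw [show Mbar = symmSmoother A M Mᵀ from hMbar] at hBITGinv
  have hBITG : IsUnit BITG.det := by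
    rw [← isUnit_nonsing_inv_det_iff, ← isUnit_iff_isUnit_det, hBITGinv]
    exact isUnit_inv_symmSmoother_add hM hMt hX hBc' hS
  rw [hMtil, ← symmSmoother_swap_eq, hAc, ← inv_symmSmoother_add_eq hM hMt hX hBc' hS,
    ← hBITGinv, nonsing_inv_nonsing_inv _ hBITG]

theorem stmt_0 {n nc : ℕ} (hnc : nc < n)
    (A M : Matrix (Fin n) (Fin n) ℝ)
    (P : Matrix (Fin n) (Fin nc) ℝ)
    (Bc : Matrix (Fin nc) (Fin nc) ℝ)
    (hA : A.PosDef) (hM : IsUnit M.det)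
    (hMMA : (M + Mᵀ - A).PosDef)
    (hP : P.rank = nc)
    (hBc : Bc.PosDef)
    (Mbar Mtil : Matrix (Fin n) (Fin n) ℝ)
    (hMbar : Mbar = M * (M + Mᵀ - A)⁻¹ * Mᵀ)
    (hMtil : Mtil = Mᵀ * (M + Mᵀ - A)⁻¹ * M)
    (Ac : Matrix (Fin nc) (Fin nc) ℝ) (hAc : Ac = Pᵀ * A * P)
    (BITG : Matrix (Fin n) (Fin n) ℝ) (hBITG : BITG.PosDef)
    (hBITGinv : BITG⁻¹ = Mbar⁻¹ + (1 - Mᵀ⁻¹ * A) * P * Bc⁻¹ * Pᵀ * (1 - A * M⁻¹)) :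
    BITG = A + (1 - A * Mᵀ⁻¹) * Mtil *
      (1 - P * (Pᵀ * Mtil * P + Bc - Ac)⁻¹ * Pᵀ * Mtil) * (1 - M⁻¹ * A) :=
  stmt_0_general A M P Bc hM hMMA hBc Mbar Mtil hMbar hMtil Ac hAc BITG hBITGinv
end

section
/- Let A ∈ ℝ^{n×n} be SPD, M ∈ ℝ^{n×n} nonsingular with M + Mᵀ − A SPD, and P ∈ ℝ^{n×n_c} of full column rank. Set M̃ := Mᵀ(M+Mᵀ−A)^{-1}M, Π_M̃ := P(PᵀM̃P)^{-1}PᵀM̃, and K_TG := max_{v≠0} ‖(I−Π_M̃)v‖²_M̃ / ‖v‖²_A. Then λ_min(B_TG^{-1}A) = 1/K_TG, where B_TG is the exact two-grid preconditioner with B_TG^{-1} = M̄^{-1} + (I−M^{-T}A)P(PᵀAP)^{-1}Pᵀ(I−AM^{-1}) and M̄ := M(M+Mᵀ−A)^{-1}Mᵀ. Equivalently, K_TG = λ_max(A^{-1}B_TG). -/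
/-!
Write `N = M + Mᵀ - A`, `T = 1 - Π_M̃` and `X = Tᵀ M̃ T`, so that `K_TG` is the largest Rayleigh
quotient of `X` against `A`, i.e. the largest eigenvalue of `A⁻¹ X`. Inverting the formula for
`B_TG⁻¹` gives `B_TG = A + (1 - A Mᵀ⁻¹) X (1 - M⁻¹ A)`. Hence `A⁻¹ B_TG - 1` is a product `U V`,
and `V U = X A⁻¹ - Tᵀ` because `(1 - M⁻¹ A) A⁻¹ (1 - A Mᵀ⁻¹) = A⁻¹ - M̃⁻¹` and `X M̃⁻¹ = Tᵀ`.
Since `UV` and `VU` share their nonzero eigenvalues and `Tᵀ` is a projection whose range contains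
that of `X`, the matrices `A⁻¹ B_TG` and `A⁻¹ X` have the same eigenvalues outside `{0, 1}`.

The eigenvalue `1` is handled separately. As `n_c < n` there is `v ≠ 0` with `Π_M̃ v = 0`; for it
`vᵀ X v = vᵀ M̃ v = vᵀ A v + wᵀ N⁻¹ w` with `w = (Mᵀ - A) v`, so `K_TG ≥ 1`, and `K_TG = 1` forces
`w = 0`, making `M - A`, hence `1 - M⁻¹ A`, singular and `1` an eigenvalue of `A⁻¹ B_TG`. All
eigenvalues of `A⁻¹ B_TG` are positive, and those of `B_TG⁻¹ A` are their inverses.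
-/

open Matrix

/-- Energy norm induced by a matrix `G`: `‖v‖_G = ⟨G v, v⟩^{1/2}`. -/
noncomputable def enorm {m : Type*} [Fintype m] (G : Matrix m m ℝ) (v : m → ℝ) : ℝ :=
  Real.sqrt (v ⬝ᵥ (G *ᵥ v))

theorem spectrum.mem_mul_comm_of_ne_zero {𝕜 A : Type*} [Field 𝕜] [Ring A] [Algebra 𝕜 A]
    {a b : A} {μ : 𝕜} (hμ : μ ≠ 0) : μ ∈ spectrum 𝕜 (a * b) ↔ μ ∈ spectrum 𝕜 (b * a) := by
  simpa [hμ] using congrArg (μ ∈ ·) (spectrum.nonzero_mul_comm a b)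

/- Instantiated with `Lt = 1 - M⁻¹ A`, `L = 1 - Mᵀ⁻¹ A`, `Rs = Ltᵀ`, `Rs' = Lᵀ`, `S = M̄⁻¹`,
`C = M̃⁻¹`, `Q = P (Pᵀ A P)⁻¹ Pᵀ` and `U = (1 - Π_M̃)ᵀ`, this inverts the formula for `B_TG⁻¹`. -/
theorem mul_eq_one_of_twoGrid {R : Type*} [Ring R] {A S Rs Rs' L Lt C X Q U : R}
    (hS : A * S + Rs * Rs' = 1) (hLtS : Lt * S = C * Rs') (hLtL : Lt * L = 1 - C * A)
    (hAL : A * L = Rs * A) (hXC : X * C = U) (hXQ : X * Q = 0) (hU : (1 - U) * A * Q = 1 - U) :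
    (A + Rs * X * Lt) * (S + L * Q * Rs') = 1 :=
  calc (A + Rs * X * Lt) * (S + L * Q * Rs')
      = A * S + A * L * Q * Rs' + Rs * X * (Lt * S) + Rs * X * (Lt * L) * Q * Rs' := by
        noncomm_ring
    _ = A * S + Rs * ((1 - U) * A * Q + U + X * Q) * Rs' := by
        rw [hAL, hLtS, hLtL, ← hXC]; noncomm_ring
    _ = A * S + Rs * Rs' := by rw [hU, hXQ]; noncomm_ring
    _ = 1 := hS

theorem IsGreatest.isLeast_inv_of_pos {α : Type*} [Field α] [LinearOrder α] [IsStrictOrderedRing α]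
    {s : Set α} {a : α} (h : IsGreatest s a) (hs : ∀ x ∈ s, 0 < x) : IsLeast s⁻¹ a⁻¹ :=
  ⟨by simpa using h.1, fun x hx => by simpa using inv_anti₀ (hs _ hx) (h.2 hx)⟩

namespace Matrix

section Spectrum

variable {K m : Type*} [Field K] [Fintype m] [DecidableEq m]

theorem mem_spectrum_iff_exists_mulVec_eq_smul {X : Matrix m m K} {μ : K} :
    μ ∈ spectrum K X ↔ ∃ v ≠ 0, X *ᵥ v = μ • v := by
  rw [spectrum.mem_iff, Algebra.algebraMap_eq_smul_one, isUnit_iff_isUnit_det, isUnit_iff_ne_zero,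
    not_not, ← exists_mulVec_eq_zero_iff]
  simp only [sub_mulVec, smul_mulVec, one_mulVec, sub_eq_zero, eq_comm]

theorem mem_spectrum_nonsing_inv_mul_iff {A X : Matrix m m K} (hA : IsUnit A.det) {μ : K} :
    μ ∈ spectrum K (A⁻¹ * X) ↔ ∃ v ≠ 0, X *ᵥ v = μ • A *ᵥ v := by
  simp only [mem_spectrum_iff_exists_mulVec_eq_smul, ← mulVec_mulVec]
  refine exists_congr fun v => and_congr_right fun _ => ⟨fun h => ?_, fun h => ?_⟩
  · rw [← mulVec_smul, ← h, mulVec_mulVec, mul_nonsing_inv _ hA, one_mulVec]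
  · rw [h, mulVec_smul, mulVec_mulVec, nonsing_inv_mul _ hA, one_mulVec]

theorem spectrum_nonsing_inv_mul_comm {A B : Matrix m m K} (hA : IsUnit A.det)
    (hB : IsUnit B.det) : spectrum K (B⁻¹ * A) = (spectrum K (A⁻¹ * B))⁻¹ := by
  have hAB : IsUnit (A⁻¹ * B) := (isUnit_iff_isUnit_det _).2 <| by
    simpa only [det_mul] using (isUnit_nonsing_inv_det A hA).mul hB
  rw [← hAB.unit_spec, spectrum.map_inv, coe_units_inv, hAB.unit_spec, Matrix.mul_inv_rev,
    nonsing_inv_nonsing_inv _ hA]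

theorem add_one_mem_spectrum_iff_mem_spectrum_sub {S Y : Matrix m m K} (hS : IsIdempotentElem S)
    (hSY : S * Y = Y) {ν : K} (hν : ν ≠ 0) (hν1 : ν + 1 ≠ 0) :
    ν + 1 ∈ spectrum K Y ↔ ν ∈ spectrum K (Y - S) := by
  simp only [mem_spectrum_iff_exists_mulVec_eq_smul]
  refine exists_congr fun x => and_congr_right fun _ => ⟨fun h => ?_, fun h => ?_⟩
  · have hSx : S *ᵥ x = x := by
      apply smul_right_injective _ hν1
      dsimp only
      rw [← mulVec_smul, ← h, mulVec_mulVec, hSY]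
    rw [sub_mulVec, h, hSx, add_smul, one_smul, add_sub_cancel_right]
  · have hSYS : S * (Y - S) = Y - S := by rw [Matrix.mul_sub, hSY, hS.eq]
    have hSx : S *ᵥ x = x := by
      apply smul_right_injective _ hν
      dsimp only
      rw [← mulVec_smul, ← h, mulVec_mulVec, hSYS]
    rw [sub_mulVec, hSx, sub_eq_iff_eq_add] at h
    rw [h, add_smul, one_smul]

theorem mem_spectrum_nonsing_inv_mul_add_iff {A R X L S : Matrix m m K} (hA : IsUnit A.det)
    (hS : IsIdempotentElem S) (hSX : S * X = X) (hX : X * (L * A⁻¹ * R) = X * A⁻¹ - S) {μ : K}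
    (hμ0 : μ ≠ 0) (hμ1 : μ ≠ 1) :
    μ ∈ spectrum K (A⁻¹ * (A + R * X * L)) ↔ μ ∈ spectrum K (A⁻¹ * X) := by
  have hsplit : A⁻¹ * (A + R * X * L) = algebraMap K (Matrix m m K) 1 + A⁻¹ * R * (X * L) := by
    rw [map_one, Matrix.mul_add, nonsing_inv_mul _ hA]
    simp only [Matrix.mul_assoc]
  have hν : μ - 1 ≠ 0 := sub_ne_zero.2 hμ1
  calc μ ∈ spectrum K (A⁻¹ * (A + R * X * L))
      ↔ μ - 1 + 1 ∈ spectrum K (algebraMap K _ 1 + A⁻¹ * R * (X * L)) := by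
        rw [sub_add_cancel, hsplit]
    _ ↔ μ - 1 ∈ spectrum K (A⁻¹ * R * (X * L)) := spectrum.add_mem_add_iff
    _ ↔ μ - 1 ∈ spectrum K (X * L * (A⁻¹ * R)) := spectrum.mem_mul_comm_of_ne_zero hν
    _ ↔ μ - 1 ∈ spectrum K (X * A⁻¹ - S) := by rw [← hX]; simp only [Matrix.mul_assoc]
    _ ↔ μ - 1 + 1 ∈ spectrum K (X * A⁻¹) :=
        (add_one_mem_spectrum_iff_mem_spectrum_sub hS (by rw [← Matrix.mul_assoc, hSX]) hν
          (by rwa [sub_add_cancel])).symm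
    _ ↔ μ ∈ spectrum K (A⁻¹ * X) := by
        rw [sub_add_cancel]; exact spectrum.mem_mul_comm_of_ne_zero hμ0

end Spectrum

section Rectangular

variable {m k : Type*} [Fintype k]

theorem dotProduct_transpose_mul_mul_mulVec [Fintype m] {R : Type*} [CommSemiring R]
    (C : Matrix m k R) (G : Matrix m m R) (v : k → R) :
    v ⬝ᵥ (Cᵀ * G * C) *ᵥ v = (C *ᵥ v) ⬝ᵥ G *ᵥ (C *ᵥ v) := by
  rw [← mulVec_mulVec, ← mulVec_mulVec, dotProduct_mulVec v, vecMul_transpose]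

theorem mulVec_injective_of_rank_eq {K : Type*} [Field K] {P : Matrix m k K}
    (hP : P.rank = Fintype.card k) : Function.Injective P.mulVec := by
  rw [mulVec_injective_iff, linearIndependent_iff_card_eq_finrank_span, Set.finrank,
    ← rank_eq_finrank_span_cols, hP]

theorem exists_mulVec_eq_zero_of_card_lt [Fintype m] {K : Type*} [Field K] (W : Matrix k m K)
    (h : Fintype.card k < Fintype.card m) : ∃ v ≠ 0, W *ᵥ v = 0 := by
  have := LinearMap.ker_ne_bot_of_finrank_lt (f := W.mulVecLin) (by simpa using h)
  obtain ⟨v, hv, hv0⟩ := (Submodule.ne_bot_iff _).1 this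
  exact ⟨v, hv0, hv⟩

end Rectangular

section Rayleigh

variable {m : Type*} [Fintype m]

theorem PosDef.transpose_mul_mul_same {k : Type*} [Fintype k] {G : Matrix m m ℝ} (hG : G.PosDef)
    {C : Matrix m k ℝ} (hC : Function.Injective C.mulVec) : (Cᵀ * G * C).PosDef := by
  rw [← conjTranspose_eq_transpose_of_trivial]
  exact hG.conjTranspose_mul_mul_same hC

theorem dotProduct_mulVec_le_of_mem_upperBounds {A X : Matrix m m ℝ} (hA : A.PosDef) {K : ℝ}
    (hK : K ∈ upperBounds {r | ∃ v : m → ℝ, v ≠ 0 ∧ r = v ⬝ᵥ X *ᵥ v / v ⬝ᵥ A *ᵥ v})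
    (v : m → ℝ) : v ⬝ᵥ X *ᵥ v ≤ K * v ⬝ᵥ A *ᵥ v := by
  rcases eq_or_ne v 0 with rfl | hv
  · simp
  · have hvA : 0 < v ⬝ᵥ A *ᵥ v := by simpa using hA.dotProduct_mulVec_pos hv
    exact (div_le_iff₀ hvA).1 (hK ⟨v, hv, rfl⟩)

variable [DecidableEq m]

theorem PosDef.pos_of_mem_spectrum_nonsing_inv_mul {A B : Matrix m m ℝ} (hA : A.PosDef)
    (hB : B.PosDef) {μ : ℝ} (hμ : μ ∈ spectrum ℝ (A⁻¹ * B)) : 0 < μ := by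
  obtain ⟨v, hv, hBv⟩ := (mem_spectrum_nonsing_inv_mul_iff hA.det_pos.ne'.isUnit).1 hμ
  have hvB := hB.dotProduct_mulVec_pos hv
  rw [star_trivial, hBv, dotProduct_smul, smul_eq_mul] at hvB
  exact pos_of_mul_pos_left hvB (by simpa using (hA.dotProduct_mulVec_pos hv).le)

theorem isGreatest_spectrum_nonsing_inv_mul {A X : Matrix m m ℝ} (hA : A.PosDef)
    (hX : X.IsHermitian) {K : ℝ}
    (hK : IsGreatest {r | ∃ v : m → ℝ, v ≠ 0 ∧ r = v ⬝ᵥ X *ᵥ v / v ⬝ᵥ A *ᵥ v} K) :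
    IsGreatest (spectrum ℝ (A⁻¹ * X)) K := by
  have hAu : IsUnit A.det := hA.det_pos.ne'.isUnit
  have hle := dotProduct_mulVec_le_of_mem_upperBounds hA hK.2
  refine ⟨?_, fun μ hμ => ?_⟩
  · obtain ⟨v, hv, hKv⟩ := hK.1
    have hvA : 0 < v ⬝ᵥ A *ᵥ v := by simpa using hA.dotProduct_mulVec_pos hv
    -- `K • A - X` is positive semidefinite and its form vanishes at the maximiser `v`.
    have hpsd : (K • A - X).PosSemidef :=
      .of_dotProduct_mulVec_nonneg ((hA.1.smul (.all K)).sub hX) fun w => by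
        simpa [sub_mulVec, smul_mulVec, dotProduct_sub, dotProduct_smul] using hle w
    have h0 : (K • A - X) *ᵥ v = 0 := by
      refine (hpsd.dotProduct_mulVec_zero_iff v).1 ?_
      rw [star_trivial, sub_mulVec, smul_mulVec, dotProduct_sub, dotProduct_smul, smul_eq_mul, hKv,
        div_mul_cancel₀ _ hvA.ne', sub_self]
    refine (mem_spectrum_nonsing_inv_mul_iff hAu).2 ⟨v, hv, ?_⟩
    rw [sub_mulVec, sub_eq_zero, smul_mulVec] at h0
    exact h0.symm
  · obtain ⟨v, hv, hXv⟩ := (mem_spectrum_nonsing_inv_mul_iff hAu).1 hμ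
    have hvA : 0 < v ⬝ᵥ A *ᵥ v := by simpa using hA.dotProduct_mulVec_pos hv
    have := hle v
    rw [hXv, dotProduct_smul, smul_eq_mul] at this
    exact le_of_mul_le_mul_right this hvA

end Rayleigh

section Projection

variable {α m k : Type*} [CommRing α] [Fintype m] [Fintype k] [DecidableEq k]
  {G : Matrix m m α} {P : Matrix m k α}

noncomputable def orthProj (G : Matrix m m α) (P : Matrix m k α) : Matrix m m α :=
  P * (Pᵀ * G * P)⁻¹ * Pᵀ * G

theorem orthProj_mul (hP : IsUnit (Pᵀ * G * P).det) : orthProj G P * P = P :=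
  calc orthProj G P * P = P * ((Pᵀ * G * P)⁻¹ * (Pᵀ * G * P)) := by
        simp only [orthProj, Matrix.mul_assoc]
    _ = P := by rw [nonsing_inv_mul _ hP, Matrix.mul_one]

theorem isIdempotentElem_orthProj (hP : IsUnit (Pᵀ * G * P).det) :
    IsIdempotentElem (orthProj G P) :=
  calc orthProj G P * orthProj G P = orthProj G P * P * ((Pᵀ * G * P)⁻¹ * Pᵀ * G) := by
        simp only [orthProj, Matrix.mul_assoc]
    _ = orthProj G P := by rw [orthProj_mul hP]; simp only [orthProj, Matrix.mul_assoc]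

theorem transpose_orthProj (hG : G.IsSymm) :
    (orthProj G P)ᵀ = G * P * (Pᵀ * G * P)⁻¹ * Pᵀ := by
  have hGP : (Pᵀ * G * P)ᵀ = Pᵀ * G * P := by
    rw [transpose_mul, transpose_mul, transpose_transpose, hG.eq, Matrix.mul_assoc]
  rw [orthProj, transpose_mul, transpose_mul, transpose_mul, transpose_nonsing_inv, hGP,
    transpose_transpose, hG.eq]
  simp only [Matrix.mul_assoc]

theorem mul_orthProj (hG : G.IsSymm) : G * orthProj G P = (orthProj G P)ᵀ * G := by
  rw [transpose_orthProj hG, orthProj]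
  simp only [Matrix.mul_assoc]

theorem transpose_orthProj_mul_coarse (hG : G.IsSymm) {A : Matrix m m α}
    (hA : IsUnit (Pᵀ * A * P).det) :
    (orthProj G P)ᵀ * A * (P * (Pᵀ * A * P)⁻¹ * Pᵀ) = (orthProj G P)ᵀ := by
  rw [transpose_orthProj hG]
  calc G * P * (Pᵀ * G * P)⁻¹ * Pᵀ * A * (P * (Pᵀ * A * P)⁻¹ * Pᵀ)
      = G * P * (Pᵀ * G * P)⁻¹ * ((Pᵀ * A * P) * (Pᵀ * A * P)⁻¹) * Pᵀ := by
        simp only [Matrix.mul_assoc]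
    _ = G * P * (Pᵀ * G * P)⁻¹ * Pᵀ := by rw [mul_nonsing_inv _ hA, Matrix.mul_one]

variable [DecidableEq m]

theorem isIdempotentElem_transpose_one_sub_orthProj (hP : IsUnit (Pᵀ * G * P).det) :
    IsIdempotentElem (1 - orthProj G P)ᵀ := by
  rw [IsIdempotentElem, ← transpose_mul, (isIdempotentElem_orthProj hP).one_sub.eq]

theorem one_sub_orthProj_mul (hP : IsUnit (Pᵀ * G * P).det) : (1 - orthProj G P) * P = 0 := by
  rw [Matrix.sub_mul, Matrix.one_mul, orthProj_mul hP, sub_self]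

theorem transpose_mul_mul_one_sub_orthProj (hP : IsUnit (Pᵀ * G * P).det) (hG : G.IsSymm) :
    (1 - orthProj G P)ᵀ * G * (1 - orthProj G P) = (1 - orthProj G P)ᵀ * G := by
  have hGT : G * (1 - orthProj G P) = (1 - orthProj G P)ᵀ * G := by
    rw [Matrix.mul_sub, mul_orthProj hG, transpose_sub, transpose_one, Matrix.sub_mul,
      Matrix.mul_one, Matrix.one_mul]
  rw [Matrix.mul_assoc, hGT, ← Matrix.mul_assoc,
    (isIdempotentElem_transpose_one_sub_orthProj hP).eq]

theorem transpose_mul_mul_one_sub_orthProj_mul_inv (hP : IsUnit (Pᵀ * G * P).det)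
    (hG : G.IsSymm) (hGu : IsUnit G.det) :
    (1 - orthProj G P)ᵀ * G * (1 - orthProj G P) * G⁻¹ = (1 - orthProj G P)ᵀ := by
  rw [transpose_mul_mul_one_sub_orthProj hP hG, Matrix.mul_assoc, mul_nonsing_inv _ hGu,
    Matrix.mul_one]

end Projection

/- `Mᵀ⁻¹ (M + Mᵀ - A) M⁻¹ = M̄⁻¹` and `M⁻¹ (M + Mᵀ - A) Mᵀ⁻¹ = M̃⁻¹`; `1 - M⁻¹ A` and `1 - Mᵀ⁻¹ A`
propagate the error of the pre- and post-smoothing steps. -/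
section Smoother

variable {α m : Type*} [CommRing α] [Fintype m] [DecidableEq m] {A M : Matrix m m α}

theorem mul_nonsing_inv_mul_inv {X D Y : Matrix m m α} (hD : IsUnit D.det) :
    (X * D⁻¹ * Y)⁻¹ = Y⁻¹ * D * X⁻¹ := by
  rw [Matrix.mul_inv_rev, Matrix.mul_inv_rev, nonsing_inv_nonsing_inv _ hD, Matrix.mul_assoc]

theorem isSymm_transpose_mul_inv_mul (hA : A.IsSymm) : (Mᵀ * (M + Mᵀ - A)⁻¹ * M).IsSymm := by
  have hN : (M + Mᵀ - A).IsSymm := by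
    rw [IsSymm, transpose_sub, transpose_add, transpose_transpose, hA.eq, add_comm]
  rw [IsSymm, transpose_mul, transpose_mul, transpose_transpose, hN.inv.eq, Matrix.mul_assoc]

theorem isUnit_det_transpose_mul_inv_mul (hM : IsUnit M.det) (hN : IsUnit (M + Mᵀ - A).det) :
    IsUnit (Mᵀ * (M + Mᵀ - A)⁻¹ * M).det := by
  rw [det_mul, det_mul, det_transpose]
  exact (hM.mul (isUnit_nonsing_inv_det _ hN)).mul hM

theorem mul_symmSmootherInv_add_errors (hM : IsUnit M.det) :
    A * (Mᵀ⁻¹ * (M + Mᵀ - A) * M⁻¹) + (1 - A * Mᵀ⁻¹) * (1 - A * M⁻¹) = 1 := by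
  have hMT : IsUnit Mᵀ.det := by rwa [det_transpose]
  simp only [mul_sub, sub_mul, mul_add, add_mul, mul_one, one_mul, Matrix.mul_assoc,
    mul_nonsing_inv _ hM, nonsing_inv_mul _ hMT]
  abel

theorem smootherError_mul_symmSmootherInv (hM : IsUnit M.det) :
    (1 - M⁻¹ * A) * (Mᵀ⁻¹ * (M + Mᵀ - A) * M⁻¹) =
      M⁻¹ * (M + Mᵀ - A) * Mᵀ⁻¹ * (1 - A * M⁻¹) := by
  have hMT : IsUnit Mᵀ.det := by rwa [det_transpose]
  simp only [mul_sub, sub_mul, mul_add, add_mul, mul_one, one_mul, Matrix.mul_assoc,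
    mul_nonsing_inv _ hMT, nonsing_inv_mul _ hM, nonsing_inv_mul _ hMT, mul_nonsing_inv _ hM]
  abel

theorem smootherError_mul_smootherError (hM : IsUnit M.det) :
    (1 - M⁻¹ * A) * (1 - Mᵀ⁻¹ * A) = 1 - M⁻¹ * (M + Mᵀ - A) * Mᵀ⁻¹ * A := by
  have hMT : IsUnit Mᵀ.det := by rwa [det_transpose]
  simp only [mul_sub, sub_mul, mul_add, add_mul, mul_one, one_mul, Matrix.mul_assoc,
    nonsing_inv_mul_cancel_left _ _ hM, mul_nonsing_inv_cancel_left _ _ hMT]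
  abel

theorem smootherError_mul_inv_mul_smootherError (hA : IsUnit A.det) (hM : IsUnit M.det) :
    (1 - M⁻¹ * A) * A⁻¹ * (1 - A * Mᵀ⁻¹) = A⁻¹ - M⁻¹ * (M + Mᵀ - A) * Mᵀ⁻¹ := by
  have hMT : IsUnit Mᵀ.det := by rwa [det_transpose]
  simp only [mul_sub, sub_mul, mul_add, add_mul, mul_one, one_mul, Matrix.mul_assoc,
    nonsing_inv_mul_cancel_left _ _ hM, nonsing_inv_mul_cancel_left _ _ hA, mul_nonsing_inv _ hA,
    mul_nonsing_inv _ hMT]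
  abel

theorem transpose_mul_inv_mul_eq_add (hA : A.IsSymm) (hN : IsUnit (M + Mᵀ - A).det) :
    Mᵀ * (M + Mᵀ - A)⁻¹ * M = A + (Mᵀ - A)ᵀ * (M + Mᵀ - A)⁻¹ * (Mᵀ - A) := by
  obtain ⟨N, hNdef⟩ : ∃ N, N = M + Mᵀ - A := ⟨_, rfl⟩
  rw [← hNdef] at hN ⊢
  have hMA : (Mᵀ - A)ᵀ = N - Mᵀ := by
    rw [transpose_sub, transpose_transpose, hA.eq, hNdef]; abel
  have hMTA : Mᵀ - A = N - M := by rw [hNdef]; abel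
  rw [hMA, hMTA]
  simp only [mul_sub, sub_mul, Matrix.mul_assoc, mul_nonsing_inv _ hN, nonsing_inv_mul _ hN,
    mul_one, one_mul]
  rw [hNdef]; abel

end Smoother

section TwoGrid

variable {α m k : Type*} [CommRing α] [Fintype m] [DecidableEq m] [Fintype k] [DecidableEq k]
  {A M G : Matrix m m α} {P : Matrix m k α}

theorem eq_add_of_nonsing_inv_eq_twoGrid (hA : A.IsSymm) (hM : IsUnit M.det)
    (hN : IsUnit (M + Mᵀ - A).det) (hG : G = Mᵀ * (M + Mᵀ - A)⁻¹ * M)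
    (hGP : IsUnit (Pᵀ * G * P).det) (hAP : IsUnit (Pᵀ * A * P).det) {B : Matrix m m α}
    (hB : IsUnit B.det)
    (hBinv : B⁻¹ = (M * (M + Mᵀ - A)⁻¹ * Mᵀ)⁻¹ +
      (1 - Mᵀ⁻¹ * A) * P * (Pᵀ * A * P)⁻¹ * Pᵀ * (1 - A * M⁻¹)) :
    B = A + (1 - A * Mᵀ⁻¹) * ((1 - orthProj G P)ᵀ * G * (1 - orthProj G P)) *
      (1 - M⁻¹ * A) := by
  have hGs : G.IsSymm := hG ▸ isSymm_transpose_mul_inv_mul hA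
  have hGinv : G⁻¹ = M⁻¹ * (M + Mᵀ - A) * Mᵀ⁻¹ := hG ▸ mul_nonsing_inv_mul_inv hN
  have hGu : IsUnit G.det := hG ▸ isUnit_det_transpose_mul_inv_mul hM hN
  have hinv : (A + (1 - A * Mᵀ⁻¹) * ((1 - orthProj G P)ᵀ * G * (1 - orthProj G P)) *
      (1 - M⁻¹ * A)) * B⁻¹ = 1 := by
    have hcoarse : (1 - Mᵀ⁻¹ * A) * P * (Pᵀ * A * P)⁻¹ * Pᵀ * (1 - A * M⁻¹) =
        (1 - Mᵀ⁻¹ * A) * (P * (Pᵀ * A * P)⁻¹ * Pᵀ) * (1 - A * M⁻¹) := by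
      simp only [Matrix.mul_assoc]
    rw [hBinv, mul_nonsing_inv_mul_inv hN, hcoarse]
    refine mul_eq_one_of_twoGrid (mul_symmSmootherInv_add_errors hM)
      (by rw [smootherError_mul_symmSmootherInv hM, hGinv])
      (by rw [smootherError_mul_smootherError hM, hGinv]) (by noncomm_ring)
      (transpose_mul_mul_one_sub_orthProj_mul_inv hGP hGs hGu) ?_ ?_
    · rw [show (1 - orthProj G P)ᵀ * G * (1 - orthProj G P) * (P * (Pᵀ * A * P)⁻¹ * Pᵀ) =
          (1 - orthProj G P)ᵀ * G * ((1 - orthProj G P) * P) * ((Pᵀ * A * P)⁻¹ * Pᵀ) by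
            simp only [Matrix.mul_assoc],
        one_sub_orthProj_mul hGP, Matrix.mul_zero, Matrix.zero_mul]
    · rw [transpose_sub, transpose_one, sub_sub_cancel]
      exact transpose_orthProj_mul_coarse hGs hAP
  calc B = B⁻¹⁻¹ := (nonsing_inv_nonsing_inv B hB).symm
    _ = _ := inv_eq_left_inv hinv

end TwoGrid

section TwoGridSpectrum

variable {K m k : Type*} [Field K] [Fintype m] [DecidableEq m] [Fintype k] [DecidableEq k]
  {A M G : Matrix m m K} {P : Matrix m k K}

theorem mem_spectrum_twoGrid_iff (hA : IsUnit A.det) (hAs : A.IsSymm) (hM : IsUnit M.det)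
    (hN : IsUnit (M + Mᵀ - A).det) (hG : G = Mᵀ * (M + Mᵀ - A)⁻¹ * M)
    (hGP : IsUnit (Pᵀ * G * P).det) {μ : K} (hμ0 : μ ≠ 0) (hμ1 : μ ≠ 1) :
    μ ∈ spectrum K (A⁻¹ * (A + (1 - A * Mᵀ⁻¹) *
      ((1 - orthProj G P)ᵀ * G * (1 - orthProj G P)) * (1 - M⁻¹ * A))) ↔
      μ ∈ spectrum K (A⁻¹ * ((1 - orthProj G P)ᵀ * G * (1 - orthProj G P))) := by
  have hGs : G.IsSymm := hG ▸ isSymm_transpose_mul_inv_mul hAs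
  have hGinv : G⁻¹ = M⁻¹ * (M + Mᵀ - A) * Mᵀ⁻¹ := hG ▸ mul_nonsing_inv_mul_inv hN
  have hGu : IsUnit G.det := hG ▸ isUnit_det_transpose_mul_inv_mul hM hN
  have hT := isIdempotentElem_transpose_one_sub_orthProj hGP
  refine mem_spectrum_nonsing_inv_mul_add_iff hA hT ?_ ?_ hμ0 hμ1
  · rw [transpose_mul_mul_one_sub_orthProj hGP hGs, ← Matrix.mul_assoc, hT.eq]
  · rw [smootherError_mul_inv_mul_smootherError hA hM, Matrix.mul_sub, ← hGinv,
      transpose_mul_mul_one_sub_orthProj_mul_inv hGP hGs hGu]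

theorem one_mem_spectrum_nonsing_inv_mul_add {R X : Matrix m m K} (hA : IsUnit A.det)
    (hM : IsUnit M.det) (hMA : (M - A).det = 0) :
    1 ∈ spectrum K (A⁻¹ * (A + R * X * (1 - M⁻¹ * A))) := by
  obtain ⟨y, hy, hMAy⟩ := exists_mulVec_eq_zero_iff.2 hMA
  have hLy : (1 - M⁻¹ * A) *ᵥ y = 0 := by
    rw [show 1 - M⁻¹ * A = M⁻¹ * (M - A) by rw [Matrix.mul_sub, nonsing_inv_mul _ hM],
      ← mulVec_mulVec, hMAy, mulVec_zero]
  refine (mem_spectrum_nonsing_inv_mul_iff hA).2 ⟨y, hy, ?_⟩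
  rw [add_mulVec, ← mulVec_mulVec, hLy, mulVec_zero, add_zero, one_smul]

end TwoGridSpectrum

section TwoGridReal

variable {m k : Type*} [Fintype m] [DecidableEq m] [Fintype k] [DecidableEq k]
  {A M G : Matrix m m ℝ} {P : Matrix m k ℝ}

theorem posDef_transpose_mul_inv_mul (hM : IsUnit M.det) (hN : (M + Mᵀ - A).PosDef) :
    (Mᵀ * (M + Mᵀ - A)⁻¹ * M).PosDef :=
  hN.inv.transpose_mul_mul_same (mulVec_injective_of_isUnit ((isUnit_iff_isUnit_det M).2 hM))

theorem one_le_and_det_sub_eq_zero_of_le (hA : A.PosDef) (hN : (M + Mᵀ - A).PosDef)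
    (hG : G = Mᵀ * (M + Mᵀ - A)⁻¹ * M) (hk : Fintype.card k < Fintype.card m) {K : ℝ}
    (hK : ∀ v, v ⬝ᵥ ((1 - orthProj G P)ᵀ * G * (1 - orthProj G P)) *ᵥ v ≤ K * v ⬝ᵥ A *ᵥ v) :
    1 ≤ K ∧ (K = 1 → (M - A).det = 0) := by
  have hAs : A.IsSymm := isHermitian_iff_isSymm.1 hA.1
  obtain ⟨v, hv, hWv⟩ := exists_mulVec_eq_zero_of_card_lt ((Pᵀ * G * P)⁻¹ * Pᵀ * G) hk
  have hTv : (1 - orthProj G P) *ᵥ v = v := by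
    rw [sub_mulVec, one_mulVec, show orthProj G P = P * ((Pᵀ * G * P)⁻¹ * Pᵀ * G) by
      simp only [orthProj, Matrix.mul_assoc], ← mulVec_mulVec, hWv, mulVec_zero, sub_zero]
  have hGv : v ⬝ᵥ ((1 - orthProj G P)ᵀ * G * (1 - orthProj G P)) *ᵥ v =
      v ⬝ᵥ A *ᵥ v + ((Mᵀ - A) *ᵥ v) ⬝ᵥ (M + Mᵀ - A)⁻¹ *ᵥ ((Mᵀ - A) *ᵥ v) := by
    rw [dotProduct_transpose_mul_mul_mulVec, hTv, hG,
      transpose_mul_inv_mul_eq_add hAs hN.det_pos.ne'.isUnit, add_mulVec, dotProduct_add,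
      dotProduct_transpose_mul_mul_mulVec]
  have hvA : 0 < v ⬝ᵥ A *ᵥ v := by simpa using hA.dotProduct_mulVec_pos hv
  have hw : 0 ≤ ((Mᵀ - A) *ᵥ v) ⬝ᵥ (M + Mᵀ - A)⁻¹ *ᵥ ((Mᵀ - A) *ᵥ v) := by
    simpa using hN.inv.posSemidef.dotProduct_mulVec_nonneg ((Mᵀ - A) *ᵥ v)
  have hKv := hK v
  rw [hGv] at hKv
  refine ⟨le_of_mul_le_mul_right (by linarith) hvA, fun hK1 => ?_⟩
  have hw0 : (Mᵀ - A) *ᵥ v = 0 := by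
    by_contra hw0
    have := hN.inv.dotProduct_mulVec_pos hw0
    rw [star_trivial] at this
    subst hK1
    linarith
  rw [show M - A = (Mᵀ - A)ᵀ by rw [transpose_sub, transpose_transpose, hAs.eq], det_transpose]
  exact exists_mulVec_eq_zero_iff.1 ⟨v, hv, hw0⟩

theorem isGreatest_spectrum_twoGrid (hA : A.PosDef) (hM : IsUnit M.det)
    (hN : (M + Mᵀ - A).PosDef) (hG : G = Mᵀ * (M + Mᵀ - A)⁻¹ * M)
    (hP : Function.Injective P.mulVec) (hk : Fintype.card k < Fintype.card m)
    {B : Matrix m m ℝ} (hB : B.PosDef)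
    (hBinv : B⁻¹ = (M * (M + Mᵀ - A)⁻¹ * Mᵀ)⁻¹ +
      (1 - Mᵀ⁻¹ * A) * P * (Pᵀ * A * P)⁻¹ * Pᵀ * (1 - A * M⁻¹)) {K : ℝ}
    (hK : IsGreatest {r | ∃ v : m → ℝ, v ≠ 0 ∧ r =
      v ⬝ᵥ ((1 - orthProj G P)ᵀ * G * (1 - orthProj G P)) *ᵥ v / v ⬝ᵥ A *ᵥ v} K) :
    IsGreatest (spectrum ℝ (A⁻¹ * B)) K := by
  have hAs : A.IsSymm := isHermitian_iff_isSymm.1 hA.1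
  have hAu : IsUnit A.det := hA.det_pos.ne'.isUnit
  have hNu : IsUnit (M + Mᵀ - A).det := hN.det_pos.ne'.isUnit
  have hG_pd : G.PosDef := hG ▸ posDef_transpose_mul_inv_mul hM hN
  have hGPu : IsUnit (Pᵀ * G * P).det := (hG_pd.transpose_mul_mul_same hP).det_pos.ne'.isUnit
  have hX := isGreatest_spectrum_nonsing_inv_mul hA
    (by rw [← conjTranspose_eq_transpose_of_trivial]
        exact isHermitian_conjTranspose_mul_mul _ hG_pd.1) hK
  obtain ⟨hK1, hKdet⟩ := one_le_and_det_sub_eq_zero_of_le hA hN hG hk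
    (dotProduct_mulVec_le_of_mem_upperBounds hA hK.2)
  have hBeq := eq_add_of_nonsing_inv_eq_twoGrid hAs hM hNu hG hGPu
    (hA.transpose_mul_mul_same hP).det_pos.ne'.isUnit hB.det_pos.ne'.isUnit hBinv
  refine ⟨?_, fun μ hμ => ?_⟩
  · rcases eq_or_ne K 1 with rfl | hK1'
    · exact hBeq ▸ one_mem_spectrum_nonsing_inv_mul_add hAu hM (hKdet rfl)
    · rw [hBeq, mem_spectrum_twoGrid_iff hAu hAs hM hNu hG hGPu (by positivity) hK1']
      exact hX.1
  · have hμ0 := (hA.pos_of_mem_spectrum_nonsing_inv_mul hB hμ).ne'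
    rcases eq_or_ne μ 1 with rfl | hμ1
    · exact hK1
    · rw [hBeq, mem_spectrum_twoGrid_iff hAu hAs hM hNu hG hGPu hμ0 hμ1] at hμ
      exact hX.2 hμ

end TwoGridReal

end Matrix

theorem enorm_sq {m : Type*} [Fintype m] {G : Matrix m m ℝ} (hG : G.PosSemidef) (v : m → ℝ) :
    enorm G v ^ 2 = v ⬝ᵥ G *ᵥ v :=
  Real.sq_sqrt (by simpa using hG.dotProduct_mulVec_nonneg v)

theorem stmt_3 {n nc : ℕ} (hnc : nc < n)
    (A M : Matrix (Fin n) (Fin n) ℝ)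
    (P : Matrix (Fin n) (Fin nc) ℝ)
    (hA : A.PosDef) (hM : IsUnit M.det)
    (hMMA : (M + Mᵀ - A).PosDef)
    (hP : P.rank = nc)
    (Mbar Mtil : Matrix (Fin n) (Fin n) ℝ)
    (hMbar : Mbar = M * (M + Mᵀ - A)⁻¹ * Mᵀ)
    (hMtil : Mtil = Mᵀ * (M + Mᵀ - A)⁻¹ * M)
    (Pi : Matrix (Fin n) (Fin n) ℝ) (hPi : Pi = P * (Pᵀ * Mtil * P)⁻¹ * Pᵀ * Mtil)
    (KTG : ℝ)
    (hK : IsGreatest {r : ℝ | ∃ v : Fin n → ℝ, v ≠ 0 ∧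
        r = (enorm Mtil ((1 - Pi) *ᵥ v)) ^ 2 / (enorm A v) ^ 2} KTG)
    (BTG : Matrix (Fin n) (Fin n) ℝ) (hBTG : BTG.PosDef)
    (hBTGinv : BTG⁻¹ = Mbar⁻¹ + (1 - Mᵀ⁻¹ * A) * P * (Pᵀ * A * P)⁻¹ * Pᵀ * (1 - A * M⁻¹)) :
    IsLeast (spectrum ℝ (BTG⁻¹ * A)) (1 / KTG) ∧
      IsGreatest (spectrum ℝ (A⁻¹ * BTG)) KTG := by
  subst hMbar
  change Pi = orthProj Mtil P at hPi
  subst hPi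
  have hMtil_pd : Mtil.PosDef := hMtil ▸ posDef_transpose_mul_inv_mul hM hMMA
  simp only [enorm_sq hMtil_pd.posSemidef, enorm_sq hA.posSemidef,
    ← dotProduct_transpose_mul_mul_mulVec] at hK
  have hmax := isGreatest_spectrum_twoGrid hA hM hMMA hMtil
    (mulVec_injective_of_rank_eq (by simpa using hP)) (by simpa using hnc) hBTG hBTGinv hK
  refine ⟨?_, hmax⟩
  rw [spectrum_nonsing_inv_mul_comm hA.det_pos.ne'.isUnit hBTG.det_pos.ne'.isUnit, one_div]
  exact hmax.isLeast_inv_of_pos fun μ hμ => hA.pos_of_mem_spectrum_nonsing_inv_mul hBTG hμ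
end

section
/- Let A ∈ ℝ^{n×n} be SPD and M ∈ ℝ^{n×n} nonsingular with M + Mᵀ − A SPD, and set M̃ := Mᵀ(M+Mᵀ−A)^{-1}M. Then the A-energy operator norm of the two-step smoothing iteration matrix satisfies ‖(I−M^{-T}A)(I−M^{-1}A)‖_A = 1 − λ_min(M̃^{-1}A). -/
open Matrix

/-! Let `B = A^{1/2}` and `S = I - B M⁻¹ B`. Conjugation by `B` turns the iteration matrix
`(I - M⁻ᵀA)(I - M⁻¹A)` into `SᵀS` and `M̃⁻¹A = I - (I - M⁻¹A)(I - M⁻ᵀA)` into `I - SSᵀ`.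
So the `A`-norm of the iteration matrix is the Euclidean operator norm of the positive
semidefinite `SᵀS`, i.e. its largest eigenvalue; since `SᵀS` and `SSᵀ` have the same spectrum,
this is `1 - λ_min(M̃⁻¹A)`. -/

theorem isGreatest_spectrum_of_isLeast_spectrum_one_sub {A : Type*} [Ring A] [Algebra ℝ A]
    {a : A} {l : ℝ} (h : IsLeast (spectrum ℝ (1 - a)) l) :
    IsGreatest (spectrum ℝ a) (1 - l) := by
  rw [← map_one (algebraMap ℝ A), ← spectrum.singleton_sub_eq] at h
  obtain ⟨⟨_, rfl, μ, hμ, rfl⟩, hl⟩ := h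
  refine ⟨by simpa using hμ, fun x hx => ?_⟩
  linarith [hl ⟨1, rfl, x, hx, rfl⟩]

theorem mul_one_sub_mul_one_sub_eq {α : Type*} [Ring α] {A B : α} (hB : B * B = A) (X Y : α) :
    B * ((1 - X * A) * (1 - Y * A)) = (1 - B * X * B) * (1 - B * Y * B) * B := by
  rw [← hB]
  noncomm_ring

namespace Matrix

variable {ι : Type*} [Fintype ι] [DecidableEq ι]

theorem spectrum_mul_comm {K : Type*} [Field K] (P Q : Matrix ι ι K) :
    spectrum K (P * Q) = spectrum K (Q * P) := by
  ext μ
  simp only [mem_spectrum_iff_isRoot_charpoly, charpoly_mul_comm]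

theorem spectrum_eq_of_mul_eq_mul {R : Type*} [CommRing R] {B P Q : Matrix ι ι R}
    (hB : IsUnit B.det) (h : B * P = Q * B) : spectrum R P = spectrum R Q := by
  have hQ : Q = B * P * B⁻¹ := by rw [h, mul_nonsing_inv_cancel_right _ _ hB]
  rw [hQ]
  exact (spectrum.units_conjugate (u := nonsingInvUnit B hB)).symm

theorem exists_mulVec_eq_smul_of_mem_spectrum {K : Type*} [Field K] {T : Matrix ι ι K} {μ : K}
    (hμ : μ ∈ spectrum K T) : ∃ v ≠ 0, T *ᵥ v = μ • v := by
  rw [← spectrum_toLin', ← Module.End.hasEigenvalue_iff_mem_spectrum] at hμ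
  obtain ⟨v, hv, hv0⟩ := hμ.exists_hasEigenvector
  exact ⟨v, hv0, Module.End.mem_eigenspace_iff.mp hv⟩

open scoped MatrixOrder in
theorem PosDef.exists_symm_sqrt {A : Matrix ι ι ℝ} (hA : A.PosDef) :
    ∃ B : Matrix ι ι ℝ, Bᵀ = B ∧ B * B = A ∧ IsUnit B.det := by
  have hsq : CFC.sqrt A * CFC.sqrt A = A := CFC.sqrt_mul_sqrt_self A hA.posSemidef.nonneg
  refine ⟨CFC.sqrt A, isHermitian_iff_isSymm.mp (CFC.sqrt_nonneg A).posSemidef.isHermitian, hsq,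
    isUnit_iff_ne_zero.mpr fun h => hA.det_pos.ne' ?_⟩
  rw [← hsq, det_mul, h, zero_mul]

open scoped MatrixOrder in
theorem dotProduct_mulVec_le_of_posSemidef {T : Matrix ι ι ℝ} (hT : T.PosSemidef) {c : ℝ}
    (hc : ∀ μ ∈ spectrum ℝ T, μ ≤ c) (w : ι → ℝ) :
    (T *ᵥ w) ⬝ᵥ (T *ᵥ w) ≤ c ^ 2 * (w ⬝ᵥ w) := by
  have hpsd : (algebraMap ℝ _ (c ^ 2) - T ^ 2 : Matrix ι ι ℝ).PosSemidef := by
    rw [← nonneg_iff_posSemidef, ← cfc_pow_id (R := ℝ) T 2, ← cfc_const (c ^ 2) T,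
      ← cfc_sub (fun _ => c ^ 2) (fun x => x ^ 2) T]
    refine cfc_nonneg fun x hx => ?_
    nlinarith [hc x hx, spectrum_nonneg_of_nonneg hT.nonneg hx]
  have hTw : (T *ᵥ w) ⬝ᵥ (T *ᵥ w) = w ⬝ᵥ ((T ^ 2) *ᵥ w) := by
    rw [sq, ← mulVec_mulVec, dotProduct_mulVec, ← mulVec_transpose,
      (isHermitian_iff_isSymm.mp hT.isHermitian).eq, dotProduct_comm]
  have := hpsd.dotProduct_mulVec_nonneg w
  simp only [star_trivial, sub_mulVec, dotProduct_sub, Algebra.algebraMap_eq_smul_one,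
    smul_mulVec, one_mulVec, dotProduct_smul, smul_eq_mul] at this
  linarith

end Matrix

section EnergyNorm

variable {ι : Type*} [Fintype ι] [DecidableEq ι]

def energyRatios (G E : Matrix ι ι ℝ) : Set ℝ :=
  {r | ∃ v : ι → ℝ, v ≠ 0 ∧ r = enorm G (E *ᵥ v) / enorm G v}

theorem enorm_transpose_mul_self (B : Matrix ι ι ℝ) (v : ι → ℝ) :
    enorm (Bᵀ * B) v = enorm 1 (B *ᵥ v) := by
  rw [_root_.enorm, _root_.enorm, ← mulVec_mulVec, dotProduct_mulVec, vecMul_transpose,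
    one_mulVec]

theorem enorm_one_pos {v : ι → ℝ} (hv : v ≠ 0) : 0 < enorm 1 v := by
  rw [_root_.enorm, one_mulVec]
  exact Real.sqrt_pos.mpr (by simpa using dotProduct_self_star_pos_iff.mpr hv)

theorem energyRatios_eq_of_mul_eq_mul {G B E T : Matrix ι ι ℝ} (hG : Bᵀ * B = G)
    (hB : IsUnit B.det) (hBE : B * E = T * B) : energyRatios G E = energyRatios 1 T := by
  have hratio (v : ι → ℝ) : enorm G (E *ᵥ v) / enorm G v
      = enorm 1 (T *ᵥ (B *ᵥ v)) / enorm 1 (B *ᵥ v) := by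
    rw [← hG, enorm_transpose_mul_self, enorm_transpose_mul_self, mulVec_mulVec, hBE,
      ← mulVec_mulVec]
  have hB' : IsUnit B := (isUnit_iff_isUnit_det B).mpr hB
  ext r
  constructor
  · rintro ⟨v, hv, rfl⟩
    exact ⟨B *ᵥ v, ((mulVec_injective_of_isUnit hB').ne_iff' (mulVec_zero B)).mpr hv, hratio v⟩
  · rintro ⟨w, hw, rfl⟩
    obtain ⟨v, rfl⟩ := mulVec_surjective_iff_isUnit.mpr hB' w
    exact ⟨v, fun hv => hw (by rw [hv, mulVec_zero]), (hratio v).symm⟩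

theorem isGreatest_energyRatios_one {T : Matrix ι ι ℝ} (hT : T.PosSemidef) {c : ℝ}
    (hc : IsGreatest (spectrum ℝ T) c) : IsGreatest (energyRatios 1 T) c := by
  have hc0 : 0 ≤ c := (posSemidef_iff_isHermitian_and_spectrum_nonneg.mp hT).2 hc.1
  have hscale (w : ι → ℝ) : enorm 1 (c • w) = c * enorm 1 w := by
    rw [_root_.enorm, _root_.enorm, one_mulVec, one_mulVec, smul_dotProduct, dotProduct_smul,
      smul_eq_mul, smul_eq_mul, ← mul_assoc, ← sq, Real.sqrt_mul (sq_nonneg c), Real.sqrt_sq hc0]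
  refine ⟨?_, ?_⟩
  · obtain ⟨u, hu, hTu⟩ := exists_mulVec_eq_smul_of_mem_spectrum hc.1
    exact ⟨u, hu, by rw [hTu, hscale, mul_div_cancel_right₀ _ (enorm_one_pos hu).ne']⟩
  · rintro _ ⟨w, hw, rfl⟩
    rw [div_le_iff₀ (enorm_one_pos hw), ← Real.sqrt_sq hc0, _root_.enorm, _root_.enorm,
      one_mulVec, one_mulVec, ← Real.sqrt_mul (sq_nonneg c)]
    exact Real.sqrt_le_sqrt (dotProduct_mulVec_le_of_posSemidef hT hc.2 w)

end EnergyNorm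

section SymmetrizedSmoother

variable {ι R : Type*} [Fintype ι] [DecidableEq ι] [CommRing R]

noncomputable def symmetrizedSmoother (A M : Matrix ι ι R) : Matrix ι ι R :=
  Mᵀ * (M + Mᵀ - A)⁻¹ * M

theorem one_sub_symmetrizedSmoother_inv_mul {A M : Matrix ι ι R} (hM : IsUnit M.det)
    (hW : IsUnit (M + Mᵀ - A).det) :
    1 - (symmetrizedSmoother A M)⁻¹ * A = (1 - M⁻¹ * A) * (1 - Mᵀ⁻¹ * A) := by
  have hMt : IsUnit Mᵀ.det := by rwa [det_transpose]
  have hinv : (symmetrizedSmoother A M)⁻¹ = M⁻¹ * (M + Mᵀ - A) * Mᵀ⁻¹ := by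
    rw [symmetrizedSmoother, Matrix.mul_inv_rev, Matrix.mul_inv_rev,
      nonsing_inv_nonsing_inv _ hW, mul_assoc]
  rw [hinv, mul_sub, mul_add, nonsing_inv_mul _ hM, sub_mul, add_mul, one_mul,
    mul_assoc M⁻¹ Mᵀ, mul_nonsing_inv _ hMt, mul_one]
  noncomm_ring

end SymmetrizedSmoother

theorem stmt_11 {n : ℕ}
    (A M : Matrix (Fin n) (Fin n) ℝ)
    (hA : A.PosDef) (hM : IsUnit M.det)
    (hMMA : (M + Mᵀ - A).PosDef)
    (Mtil : Matrix (Fin n) (Fin n) ℝ)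
    (hMtil : Mtil = Mᵀ * (M + Mᵀ - A)⁻¹ * M)
    (E : Matrix (Fin n) (Fin n) ℝ)
    (hE : E = (1 - Mᵀ⁻¹ * A) * (1 - M⁻¹ * A))
    (normE : ℝ)
    (hnormE : IsGreatest {r : ℝ | ∃ v : Fin n → ℝ, v ≠ 0 ∧
        r = enorm A (E *ᵥ v) / enorm A v} normE)
    (lmin : ℝ) (hlmin : IsLeast (spectrum ℝ (Mtil⁻¹ * A)) lmin) :
    normE = 1 - lmin := by
  obtain ⟨B, hBt, hBB, hB⟩ := hA.exists_symm_sqrt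
  set S := 1 - B * M⁻¹ * B
  have hSt : Sᵀ = 1 - B * Mᵀ⁻¹ * B := by
    rw [transpose_sub, transpose_one, transpose_mul, transpose_mul, hBt, transpose_nonsing_inv,
      mul_assoc]
  have hspec : spectrum ℝ ((1 - M⁻¹ * A) * (1 - Mᵀ⁻¹ * A)) = spectrum ℝ (S * Sᵀ) :=
    spectrum_eq_of_mul_eq_mul hB (by rw [hSt]; exact mul_one_sub_mul_one_sub_eq hBB _ _)
  have hSSt : IsGreatest (spectrum ℝ (S * Sᵀ)) (1 - lmin) := by
    rw [← hspec, ← one_sub_symmetrizedSmoother_inv_mul hM hMMA.det_pos.ne'.isUnit]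
    refine isGreatest_spectrum_of_isLeast_spectrum_one_sub ?_
    rwa [sub_sub_cancel, symmetrizedSmoother, ← hMtil]
  have hBE : B * E = (Sᵀ * S) * B := by rw [hE, hSt, mul_one_sub_mul_one_sub_eq hBB]
  have hSS : (Sᵀ * S).PosSemidef := by
    simpa using posSemidef_conjTranspose_mul_self S
  have hnorm : IsGreatest (energyRatios 1 (Sᵀ * S)) normE :=
    energyRatios_eq_of_mul_eq_mul (by rw [hBt, hBB]) hB hBE ▸ hnormE
  exact hnorm.unique (isGreatest_energyRatios_one hSS (spectrum_mul_comm S Sᵀ ▸ hSSt))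
end

section
/- Let M̃ ∈ ℝ^{n×n} be SPD, P ∈ ℝ^{n×n_c} of full column rank, and S ∈ ℝ^{n×(n−n_c)} of full column rank with PᵀS = 0. Then PᵀM̃^{-1}P = (PᵀP)(PᵀM̃P − PᵀM̃S(SᵀM̃S)^{-1}SᵀM̃P)^{-1}(PᵀP). -/
/-!
Write `G = SᵀM̃S` and `W = P - S G⁻¹ SᵀM̃P`, so that `Sᵀ(M̃W) = 0`. Because `PᵀS = 0` and the
ranks of `P` and `S` add up to `n`, the kernel of `Sᵀ` is exactly the column space of `P`, hence
`M̃W = P C` for some `C`. Multiplying by `Pᵀ`, the Schur complement `PᵀM̃W` equals `PᵀP C`, while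
`PᵀW = PᵀP` gives `PᵀP = PᵀM̃⁻¹P C`; eliminating `C` yields the identity.
-/

open Matrix

namespace Matrix

variable {m k l K : Type*} [Fintype l] [Field K]

theorem mulVec_injective_of_rank_eq_card {A : Matrix m l K} (hA : A.rank = Fintype.card l) :
    Function.Injective A.mulVec := by
  have h := A.mulVecLin.finrank_range_add_finrank_ker
  rw [Module.finrank_fintype_fun_eq_card, ← rank, hA, add_eq_left] at h
  exact LinearMap.ker_eq_bot.mp (Submodule.finrank_eq_zero.mp h)

variable [Fintype m] [Fintype k]

theorem ker_mulVecLin_transpose_eq_range {S : Matrix m k K} {P : Matrix m l K}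
    (hSP : Sᵀ * P = 0) (hrank : P.rank + S.rank = Fintype.card m) :
    LinearMap.ker Sᵀ.mulVecLin = LinearMap.range P.mulVecLin := by
  refine (Submodule.eq_of_le_of_finrank_eq ?_ ?_).symm
  · rintro _ ⟨c, rfl⟩
    rw [LinearMap.mem_ker, mulVecLin_apply, mulVecLin_apply, mulVec_mulVec, hSP, zero_mulVec]
  · have h := Sᵀ.mulVecLin.finrank_range_add_finrank_ker
    rw [← rank, rank_transpose, Module.finrank_fintype_fun_eq_card] at h
    change P.rank = _
    omega

theorem exists_eq_mul_of_transpose_mul_eq_zero {S : Matrix m k K} {P : Matrix m l K}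
    (hSP : Sᵀ * P = 0) (hrank : P.rank + S.rank = Fintype.card m) {n : Type*}
    {V : Matrix m n K} (hV : Sᵀ * V = 0) : ∃ C : Matrix l n K, V = P * C := by
  have hcol : ∀ j, (fun i => V i j) ∈ LinearMap.range P.mulVecLin := fun j => by
    rw [← ker_mulVecLin_transpose_eq_range hSP hrank, LinearMap.mem_ker, mulVecLin_apply]
    exact funext fun a => congrFun₂ hV a j
  choose c hc using hcol
  exact ⟨(of c)ᵀ, ext fun i j => (congrFun (hc j) i).symm⟩

variable [DecidableEq m] [DecidableEq k] [DecidableEq l]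

theorem transpose_mul_inv_mul_eq_mul_inv_schur_mul {M : Matrix m m ℝ} (hM : M.PosDef)
    {P : Matrix m l ℝ} {S : Matrix m k ℝ} (hP : P.rank = Fintype.card l)
    (hS : S.rank = Fintype.card k) (hcard : Fintype.card k + Fintype.card l = Fintype.card m)
    (hPS : Pᵀ * S = 0) :
    Pᵀ * M⁻¹ * P = (Pᵀ * P) *
      (Pᵀ * M * P - Pᵀ * M * S * (Sᵀ * M * S)⁻¹ * Sᵀ * M * P)⁻¹ * (Pᵀ * P) := by
  have hMu : IsUnit M.det := (isUnit_iff_isUnit_det M).mp hM.isUnit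
  have hG : IsUnit (Sᵀ * M * S).det := by
    rw [← isUnit_iff_isUnit_det]
    simpa using (hM.conjTranspose_mul_mul_same (mulVec_injective_of_rank_eq_card hS)).isUnit
  have hPP : IsUnit (Pᵀ * P).det := by
    rw [← isUnit_iff_isUnit_det]
    simpa using (PosDef.conjTranspose_mul_self P (mulVec_injective_of_rank_eq_card hP)).isUnit
  set W := P - S * (Sᵀ * M * S)⁻¹ * (Sᵀ * M * P)
  have hSMW : Sᵀ * (M * W) = 0 := by
    simp only [W, Matrix.mul_sub, ← Matrix.mul_assoc, mul_nonsing_inv _ hG, Matrix.one_mul,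
      sub_self]
  have hSP : Sᵀ * P = 0 := by rw [← transpose_transpose P, ← transpose_mul, hPS, transpose_zero]
  obtain ⟨C, hMW⟩ := exists_eq_mul_of_transpose_mul_eq_zero hSP (by omega) hSMW
  have hD : Pᵀ * M * P - Pᵀ * M * S * (Sᵀ * M * S)⁻¹ * Sᵀ * M * P = Pᵀ * P * C := by
    rw [Matrix.mul_assoc _ P C, ← hMW]
    simp only [W, Matrix.mul_sub, Matrix.mul_assoc]
  have hPW : Pᵀ * P = Pᵀ * M⁻¹ * P * C := by
    rw [Matrix.mul_assoc _ P C, ← hMW, Matrix.mul_assoc, nonsing_inv_mul_cancel_left _ _ hMu]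
    simp only [W, Matrix.mul_sub, ← Matrix.mul_assoc, hPS, Matrix.zero_mul, sub_zero]
  have hC : IsUnit C.det := isUnit_of_mul_isUnit_right (by rwa [hPW, det_mul] at hPP)
  calc Pᵀ * M⁻¹ * P = Pᵀ * P * C⁻¹ := by rw [hPW, mul_nonsing_inv_cancel_right _ _ hC]
    _ = Pᵀ * P * (C⁻¹ * (Pᵀ * P)⁻¹) * (Pᵀ * P) := by
      rw [← Matrix.mul_assoc (Pᵀ * P) C⁻¹, nonsing_inv_mul_cancel_right _ _ hPP]
    _ = _ := by rw [hD, Matrix.mul_inv_rev]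

end Matrix

theorem stmt_14 {n nc : ℕ} (hnc : nc < n)
    (Mtil : Matrix (Fin n) (Fin n) ℝ) (hMtil : Mtil.PosDef)
    (P : Matrix (Fin n) (Fin nc) ℝ) (hP : P.rank = nc)
    (S : Matrix (Fin n) (Fin (n - nc)) ℝ) (hS : S.rank = n - nc)
    (hPS : Pᵀ * S = 0) :
    Pᵀ * Mtil⁻¹ * P =
      (Pᵀ * P) * (Pᵀ * Mtil * P -
        Pᵀ * Mtil * S * (Sᵀ * Mtil * S)⁻¹ * Sᵀ * Mtil * P)⁻¹ * (Pᵀ * P) := by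
  refine transpose_mul_inv_mul_eq_mul_inv_schur_mul hMtil ?_ ?_ ?_ hPS
  · rwa [Fintype.card_fin]
  · rwa [Fintype.card_fin]
  · simp only [Fintype.card_fin]
    omega
end

section
/- Let M̃ ∈ ℝ^{n×n} be SPD, P♯ ∈ ℝ^{n×n_c} with P♯ᵀP♯ = I_{n_c}, and S ∈ ℝ^{n×(n−n_c)} of full column rank with P♯ᵀS = 0. Let β := ‖(SᵀM̃S)^{-1/2} SᵀM̃P♯ (P♯ᵀM̃P♯)^{-1/2}‖₂ ∈ [0,1) be the C.B.S. constant of the block matrix [[SᵀM̃S, SᵀM̃P♯],[P♯ᵀM̃S, P♯ᵀM̃P♯]]. Then every eigenvalue of (P♯ᵀM̃P♯)^{-1}(P♯ᵀM̃^{-1}P♯)^{-1} lies in [1−β², 1]; consequently, (1−β²)·v_cᵀP♯ᵀM̃^{-1}P♯v_c ≤ v_cᵀ(P♯ᵀM̃P♯)^{-1}v_c ≤ v_cᵀP♯ᵀM̃^{-1}P♯v_c for all v_c ∈ ℝ^{n_c}. -/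
/-!
Write `A = SᵀM̃S`, `B = SᵀM̃P♯`, `C = P♯ᵀM̃P♯`. Since `P♯ᵀP♯ = 1`, `P♯ᵀS = 0` and `rank S = n - n_c`,
the columns of `P♯` span the orthogonal complement of those of `S`; hence `P♯ᵀM̃⁻¹P♯` is the inverse
of the Schur complement `E = C - BᵀA⁻¹B`. With `R = C^{1/2}` and `X = A^{-1/2}BC^{-1/2}` one has
`E = R(1 - XᵀX)R`, and the spectrum of `H = 1 - XᵀX` lies in `[1 - β², 1]`. The matrix
`C⁻¹E = R⁻¹HR` is similar to `H`, and `P♯ᵀM̃⁻¹P♯ = R⁻¹H⁻¹R⁻¹` lies between `C⁻¹ = R⁻¹R⁻¹` and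
`(1 - β²)⁻¹C⁻¹` in the Loewner order.
-/

open Matrix

/-- The square root of a positive semidefinite matrix, as defined in the older Mathlib
(removed since): `U * diagonal (√ ∘ eigenvalues) * U⋆`. -/
noncomputable def Matrix.PosSemidef.sqrt {n 𝕜 : Type*} [Fintype n] [RCLike 𝕜] [PartialOrder 𝕜]
    [DecidableEq n]    {A : Matrix n n 𝕜} (hA : A.PosSemidef) : Matrix n n 𝕜 :=
  (hA.1.eigenvectorUnitary : Matrix n n 𝕜) * diagonal ((↑) ∘ (√·) ∘ hA.1.eigenvalues) *
    (star hA.1.eigenvectorUnitary : Matrix n n 𝕜)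

open scoped MatrixOrder

namespace Matrix

section Sqrt

variable {m : Type*} [Fintype m] [DecidableEq m]

lemma PosSemidef.sqrt_eq_cfcSqrt {A : Matrix m m ℝ} (hA : A.PosSemidef) :
    hA.sqrt = CFC.sqrt A := by
  rw [CFC.sqrt_eq_real_sqrt A hA.nonneg, cfcₙ_eq_cfc, hA.1.cfc_eq, IsHermitian.cfc, PosSemidef.sqrt,
    Unitary.conjStarAlgAut_apply]

lemma PosSemidef.sqrt_mul_self {A : Matrix m m ℝ} (hA : A.PosSemidef) :
    hA.sqrt * hA.sqrt = A := by
  rw [hA.sqrt_eq_cfcSqrt]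
  exact CFC.sqrt_mul_sqrt_self A hA.nonneg

lemma PosSemidef.isHermitian_sqrt {A : Matrix m m ℝ} (hA : A.PosSemidef) :
    hA.sqrt.IsHermitian := by
  rw [hA.sqrt_eq_cfcSqrt]
  exact (CFC.sqrt_nonneg A).isSelfAdjoint

lemma PosDef.isUnit_sqrt {A : Matrix m m ℝ} (hA : A.PosDef) : IsUnit hA.posSemidef.sqrt :=
  isUnit_of_mul_isUnit_left (hA.posSemidef.sqrt_mul_self ▸ hA.isUnit)

end Sqrt

section Complement

variable {m k l : Type*} [Fintype m] [Fintype k] [Fintype l] [DecidableEq l]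

lemma mem_range_mulVecLin_of_transpose_mulVec_eq_zero {P : Matrix m l ℝ} {S : Matrix m k ℝ}
    (hPS : Pᵀ * S = 0) (hPP : Pᵀ * P = 1) (hrank : S.rank + Fintype.card l = Fintype.card m)
    {y : m → ℝ} (hy : Sᵀ *ᵥ y = 0) : y ∈ LinearMap.range P.mulVecLin := by
  have hle : LinearMap.range P.mulVecLin ≤ LinearMap.ker Sᵀ.mulVecLin := by
    rintro _ ⟨u, rfl⟩
    have hSP : Sᵀ * P = 0 := by rw [← transpose_transpose P, ← transpose_mul, hPS, transpose_zero]
    rw [LinearMap.mem_ker, mulVecLin_apply, mulVecLin_apply, mulVec_mulVec, hSP, zero_mulVec]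
  have hrankP : P.rank = Fintype.card l := by
    rw [← rank_transpose_mul_self, hPP, rank_one]
  have hker := LinearMap.finrank_range_add_finrank_ker Sᵀ.mulVecLin
  rw [← rank, rank_transpose, Module.finrank_fintype_fun_eq_card] at hker
  have hrange : LinearMap.range P.mulVecLin = LinearMap.ker Sᵀ.mulVecLin :=
    Submodule.eq_of_le_of_finrank_eq hle (by change P.rank = _; omega)
  exact hrange ▸ hy

lemma mul_transpose_mul_eq_self {P : Matrix m l ℝ} {S : Matrix m k ℝ}
    (hPS : Pᵀ * S = 0) (hPP : Pᵀ * P = 1) (hrank : S.rank + Fintype.card l = Fintype.card m)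
    {c : Type*} [Fintype c] {Y : Matrix m c ℝ} (hY : Sᵀ * Y = 0) : P * (Pᵀ * Y) = Y := by
  refine ext_iff_mulVec.mpr fun v => ?_
  obtain ⟨u, hu⟩ := mem_range_mulVecLin_of_transpose_mulVec_eq_zero hPS hPP hrank
    (y := Y *ᵥ v) (by rw [mulVec_mulVec, hY, zero_mulVec])
  rw [← mulVec_mulVec, ← mulVec_mulVec, ← hu]
  simp [mulVec_mulVec, hPP]

variable [DecidableEq m] [DecidableEq k]

lemma transpose_mul_inv_mul_mul_schur_eq_one {M : Matrix m m ℝ} (hMt : Mᵀ = M)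
    (hM : IsUnit M.det) {P : Matrix m l ℝ} {S : Matrix m k ℝ}
    (hPS : Pᵀ * S = 0) (hPP : Pᵀ * P = 1) (hrank : S.rank + Fintype.card l = Fintype.card m)
    (hA : IsUnit (Sᵀ * M * S).det) :
    Pᵀ * M⁻¹ * P * (Pᵀ * M * P - (Sᵀ * M * P)ᵀ * (Sᵀ * M * S)⁻¹ * (Sᵀ * M * P)) = 1 := by
  set A := Sᵀ * M * S
  set B := Sᵀ * M * P
  set E := Pᵀ * M * P - Bᵀ * A⁻¹ * B
  -- `MZ` is orthogonal to the columns of `S`, so `MZ = P (Pᵀ M Z) = P E`, i.e. `Z = M⁻¹ P E`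
  set Z := P - S * (A⁻¹ * B)
  have hBt : Bᵀ = Pᵀ * M * S := by
    simp only [B, transpose_mul, transpose_transpose, hMt, Matrix.mul_assoc]
  have hSZ : Sᵀ * (M * Z) = 0 := by
    simp only [Z, Matrix.mul_sub, ← Matrix.mul_assoc]
    rw [Matrix.mul_assoc A, mul_nonsing_inv_cancel_left _ _ hA, sub_self]
  have hPZ : Pᵀ * (M * Z) = E := by
    simp only [Z, E, Matrix.mul_sub, ← Matrix.mul_assoc, hBt]
  have hPZ' : Pᵀ * Z = 1 := by
    rw [Matrix.mul_sub, hPP, ← Matrix.mul_assoc, hPS, Matrix.zero_mul, sub_zero]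
  calc Pᵀ * M⁻¹ * P * E = Pᵀ * (M⁻¹ * (P * (Pᵀ * (M * Z)))) := by
        rw [hPZ]; simp only [Matrix.mul_assoc]
    _ = 1 := by
      rw [mul_transpose_mul_eq_self hPS hPP hrank hSZ, nonsing_inv_mul_cancel_left _ _ hM, hPZ']

lemma PosDef.sub_transpose_mul_inv_mul_eq {A : Matrix k k ℝ} {C : Matrix l l ℝ}
    (hA : A.PosDef) (hC : C.PosDef) (B : Matrix k l ℝ) :
    C - Bᵀ * A⁻¹ * B = hC.posSemidef.sqrt *
      (1 - (hA.posSemidef.sqrt⁻¹ * B * hC.posSemidef.sqrt⁻¹)ᵀ *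
        (hA.posSemidef.sqrt⁻¹ * B * hC.posSemidef.sqrt⁻¹)) * hC.posSemidef.sqrt := by
  set RA := hA.posSemidef.sqrt
  set R := hC.posSemidef.sqrt
  have hRA : RA⁻¹ᵀ = RA⁻¹ := by
    rw [← conjTranspose_eq_transpose_of_trivial]; exact hA.posSemidef.isHermitian_sqrt.inv
  have hR : R⁻¹ᵀ = R⁻¹ := by
    rw [← conjTranspose_eq_transpose_of_trivial]; exact hC.posSemidef.isHermitian_sqrt.inv
  have hRA2 : RA⁻¹ * RA⁻¹ = A⁻¹ := by rw [← Matrix.mul_inv_rev, hA.posSemidef.sqrt_mul_self]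
  have hRdet : IsUnit R.det := (isUnit_iff_isUnit_det R).mp hC.isUnit_sqrt
  rw [Matrix.mul_sub, Matrix.sub_mul, Matrix.mul_one, hC.posSemidef.sqrt_mul_self, ← hRA2]
  simp only [transpose_mul, hRA, hR, Matrix.mul_assoc]
  rw [nonsing_inv_mul _ hRdet, Matrix.mul_one, mul_nonsing_inv_cancel_left _ _ hRdet]

end Complement

section Spectrum

variable {m : Type*} [Fintype m]

lemma dotProduct_mulVec_le_of_le {K L : Matrix m m ℝ} (h : K ≤ L) (v : m → ℝ) :
    v ⬝ᵥ K *ᵥ v ≤ v ⬝ᵥ L *ᵥ v := by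
  have := (le_iff.mp h).dotProduct_mulVec_nonneg v
  simpa [sub_mulVec, dotProduct_sub] using this

variable [DecidableEq m]

lemma spectrum_inv_mul_mul_of_isUnit {α : Type*} [CommRing α] {R : Matrix m m α} (hR : IsUnit R)
    (H : Matrix m m α) : spectrum α (R⁻¹ * H * R) = spectrum α H := by
  lift R to (Matrix m m α)ˣ using hR
  rw [← coe_units_inv, spectrum.units_conjugate']

lemma spectrum_one_sub_subset_Icc {N : Matrix m m ℝ} (hN : N.PosSemidef) {b : ℝ}
    (hb : ∀ x ∈ spectrum ℝ N, x ≤ b) : spectrum ℝ (1 - N) ⊆ Set.Icc (1 - b) 1 := by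
  rw [← map_one (algebraMap ℝ _), ← spectrum.singleton_sub_eq]
  rintro _ ⟨_, rfl, x, hx, rfl⟩
  have := spectrum_nonneg_of_nonneg hN.nonneg hx
  exact ⟨by linarith [hb x hx], by linarith⟩

lemma IsHermitian.nonsing_inv_mem_Icc {H : Matrix m m ℝ} (hH : H.IsHermitian) {a b : ℝ}
    (ha : 0 < a) (h : spectrum ℝ H ⊆ Set.Icc a b) :
    H⁻¹ ∈ Set.Icc (algebraMap ℝ _ b⁻¹) (algebraMap ℝ _ a⁻¹) := by
  have hpos : ∀ x ∈ spectrum ℝ H, 0 < x := fun x hx => ha.trans_le (h hx).1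
  have hunit : IsUnit H := (spectrum.zero_notMem_iff ℝ).mp fun h0 => (hpos 0 h0).false
  have hcont : ContinuousOn (fun x : ℝ => x⁻¹) (spectrum ℝ H) :=
    continuousOn_inv₀.mono fun x hx => (hpos x hx).ne'
  rw [nonsing_inv_eq_ringInverse, ← cfc_ringInverse_id (R := ℝ) (a := H) hunit]
  exact ⟨algebraMap_le_cfc _ _ _ (fun x hx => inv_anti₀ (hpos x hx) (h hx).2) hcont,
    cfc_le_algebraMap _ _ _ (fun x hx => inv_anti₀ ha (h hx).1) hcont⟩

lemma IsHermitian.nonsing_inv_mul_mul_mem_Icc {R H : Matrix m m ℝ} (hR : R.IsHermitian)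
    (hH : H.IsHermitian) {a b : ℝ} (ha : 0 < a) (h : spectrum ℝ H ⊆ Set.Icc a b) :
    (R * H * R)⁻¹ ∈ Set.Icc (b⁻¹ • (R * R)⁻¹) (a⁻¹ • (R * R)⁻¹) := by
  have hconj (c : ℝ) : R⁻¹ * algebraMap ℝ _ c * R⁻¹ = c • (R * R)⁻¹ := by
    rw [Algebra.algebraMap_eq_smul_one, Matrix.mul_smul, Matrix.smul_mul, Matrix.mul_one,
      Matrix.mul_inv_rev]
  obtain ⟨hlo, hhi⟩ := hH.nonsing_inv_mem_Icc ha h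
  have hR' : IsSelfAdjoint R⁻¹ := hR.inv
  have hinv : (R * H * R)⁻¹ = R⁻¹ * H⁻¹ * R⁻¹ := by
    rw [Matrix.mul_inv_rev, Matrix.mul_inv_rev, Matrix.mul_assoc]
  rw [hinv, ← hconj, ← hconj]
  exact ⟨hR'.conjugate_le_conjugate hlo, hR'.conjugate_le_conjugate hhi⟩

end Spectrum

end Matrix

theorem stmt_15 {n nc : ℕ} (hnc : nc < n)
    (Mtil : Matrix (Fin n) (Fin n) ℝ) (hMtil : Mtil.PosDef)
    (Ps : Matrix (Fin n) (Fin nc) ℝ) (hPs : Psᵀ * Ps = 1)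
    (S : Matrix (Fin n) (Fin (n - nc)) ℝ) (hS : S.rank = n - nc)
    (hPS : Psᵀ * S = 0)
    (hSMS : (Sᵀ * Mtil * S).PosDef) (hPMP : (Psᵀ * Mtil * Ps).PosDef)
    (β : ℝ) (hβ0 : 0 ≤ β) (hβ1 : β < 1)
    (hβ : IsGreatest (spectrum ℝ
        ((hSMS.posSemidef.sqrt⁻¹ * (Sᵀ * Mtil * Ps) * hPMP.posSemidef.sqrt⁻¹)ᵀ *
          (hSMS.posSemidef.sqrt⁻¹ * (Sᵀ * Mtil * Ps) * hPMP.posSemidef.sqrt⁻¹))) (β ^ 2)) :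
    (∀ μ ∈ spectrum ℝ ((Psᵀ * Mtil * Ps)⁻¹ * (Psᵀ * Mtil⁻¹ * Ps)⁻¹),
      μ ∈ Set.Icc (1 - β ^ 2) 1) ∧
    ∀ vc : Fin nc → ℝ,
      (1 - β ^ 2) * (vc ⬝ᵥ ((Psᵀ * Mtil⁻¹ * Ps) *ᵥ vc)) ≤
          vc ⬝ᵥ ((Psᵀ * Mtil * Ps)⁻¹ *ᵥ vc) ∧
        vc ⬝ᵥ ((Psᵀ * Mtil * Ps)⁻¹ *ᵥ vc) ≤ vc ⬝ᵥ ((Psᵀ * Mtil⁻¹ * Ps) *ᵥ vc) := by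
  set R := hPMP.posSemidef.sqrt
  set X := hSMS.posSemidef.sqrt⁻¹ * (Sᵀ * Mtil * Ps) * R⁻¹
  set H := 1 - Xᵀ * X
  have hMt : Mtilᵀ = Mtil :=
    (conjTranspose_eq_transpose_of_trivial Mtil).symm.trans hMtil.isHermitian.eq
  have hWH : Psᵀ * Mtil⁻¹ * Ps * (R * H * R) = 1 := by
    rw [← hSMS.sub_transpose_mul_inv_mul_eq hPMP]
    exact transpose_mul_inv_mul_mul_schur_eq_one hMt hMtil.det_pos.ne'.isUnit hPS hPs
      (by rw [hS, Fintype.card_fin, Fintype.card_fin]; omega) hSMS.det_pos.ne'.isUnit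
  have hN : (Xᵀ * X).PosSemidef :=
    conjTranspose_eq_transpose_of_trivial X ▸ posSemidef_conjTranspose_mul_self X
  have hH : spectrum ℝ H ⊆ Set.Icc (1 - β ^ 2) 1 :=
    spectrum_one_sub_subset_Icc hN fun _ hx => hβ.2 hx
  refine ⟨fun μ hμ => ?_, fun vc => ?_⟩
  · have hRdet : IsUnit R.det := (isUnit_iff_isUnit_det R).mp hPMP.isUnit_sqrt
    have hCE : (Psᵀ * Mtil * Ps)⁻¹ * (R * H * R) = R⁻¹ * H * R := by
      rw [← hPMP.posSemidef.sqrt_mul_self, Matrix.mul_inv_rev]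
      simp only [Matrix.mul_assoc]
      rw [nonsing_inv_mul_cancel_left _ _ hRdet]
    rw [inv_eq_right_inv hWH, hCE, spectrum_inv_mul_mul_of_isUnit hPMP.isUnit_sqrt] at hμ
    exact hH hμ
  · have hb : 0 < 1 - β ^ 2 := by nlinarith
    have hbounds : (R * H * R)⁻¹ ∈ Set.Icc ((1 : ℝ)⁻¹ • (R * R)⁻¹) ((1 - β ^ 2)⁻¹ • (R * R)⁻¹) :=
      hPMP.posSemidef.isHermitian_sqrt.nonsing_inv_mul_mul_mem_Icc
        (isHermitian_one.sub hN.isHermitian) hb hH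
    rw [inv_one, one_smul, inv_eq_left_inv hWH, hPMP.posSemidef.sqrt_mul_self] at hbounds
    obtain ⟨hlo, hhi⟩ := hbounds
    have hhi' := dotProduct_mulVec_le_of_le hhi vc
    rw [smul_mulVec, dotProduct_smul, smul_eq_mul] at hhi'
    exact ⟨(le_inv_mul_iff₀ hb).mp hhi', dotProduct_mulVec_le_of_le hlo vc⟩
end

section
/- Let σ, τ, ε be real numbers with 0 < ε ≤ τ and 0 < σ < 1 − ε. For each positive integer γ define F_γ(x) = [σε(1−x^γ) + τ(1−ε)(1−σ)x^γ] / [ε(1−x^γ) + τ(1−σ)x^γ] − x for 0 < x < 1. Then there exists a strictly decreasing sequence {x_γ}_{γ=1}^{∞} ⊂ (σ, 1−ε) with lim_{γ→∞} x_γ = σ such that F_γ(x_γ) = 0 for every γ. -/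
/-!
Clearing the denominator, which is positive on `(0, 1]`, `F_γ x = 0` becomes `G_γ x = 0` with
`G_γ x = ε (σ - x) + x ^ γ c(x)` and `c(x) = τ (1 - σ) (1 - ε - x) + ε (x - σ)`.
Since `G_γ σ > 0 > G_γ (1 - ε)`, we may take for `x_γ` the first zero of `G_{γ+1}` in `(σ, 1 - ε)`.
At a zero `x` of `G_γ` the identity `x ^ γ c(x) = ε (x - σ)` gives `G_{γ+1} x = ε (x - σ) (x - 1) < 0`,
so `G_{γ+2}` vanishes to the left of `x_γ`, i.e. `x_{γ+1} < x_γ`. Finally, as `0 ≤ c ≤ τ + ε` on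
`[σ, 1 - ε]`, we get `ε (x_γ - σ) = x_γ ^ (γ+1) c(x_γ) ≤ (1 - ε) ^ (γ+1) (τ + ε) → 0`.
-/

open Set Filter Topology

theorem exists_zero_lt_of_neg {f : ℝ → ℝ} {a b : ℝ} (hab : a ≤ b) (hf : ContinuousOn f (Icc a b))
    (ha : 0 < f a) (hb : f b < 0) :
    ∃ c ∈ Ioo a b, f c = 0 ∧ ∀ y ∈ Icc a b, f y < 0 → c < y := by
  have zero_below : ∀ y ∈ Icc a b, f y < 0 → ∃ z ∈ Icc a y, f z = 0 := fun y hy hy0 =>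
    intermediate_value_Icc' hy.1 (hf.mono (Icc_subset_Icc_right hy.2)) ⟨hy0.le, ha.le⟩
  set Z := Icc a b ∩ f ⁻¹' {0}
  have hZ_bdd : BddBelow Z := ⟨a, fun x hx => hx.1.1⟩
  have hinf_le : ∀ y ∈ Icc a b, f y < 0 → sInf Z ≤ y := fun y hy hy0 => by
    obtain ⟨z, hz, hfz⟩ := zero_below y hy hy0
    exact (csInf_le hZ_bdd ⟨⟨hz.1, hz.2.trans hy.2⟩, hfz⟩).trans hz.2
  have hb_mem : b ∈ Icc a b := ⟨hab, le_rfl⟩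
  obtain ⟨z, hz, hfz⟩ := zero_below b hb_mem hb
  have hc : sInf Z ∈ Z :=
    (hf.preimage_isClosed_of_isClosed isClosed_Icc isClosed_singleton).csInf_mem
      ⟨z, hz, hfz⟩ hZ_bdd
  have hfc : f (sInf Z) = 0 := hc.2
  have hne : ∀ y, f y ≠ 0 → sInf Z ≠ y := fun y hy h => hy (h ▸ hfc)
  exact ⟨sInf Z, ⟨hc.1.1.lt_of_ne (hne a ha.ne').symm, (hinf_le b hb_mem hb).lt_of_ne (hne b hb.ne)⟩,
    hfc, fun y hy hy0 => (hinf_le y hy hy0).lt_of_ne (hne y hy0.ne)⟩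

namespace MultigridRoot

variable (σ τ ε : ℝ)

def powCoeff (x : ℝ) : ℝ := τ * (1 - σ) * (1 - ε - x) + ε * (x - σ)

/-- `F_γ x = numerator σ τ ε γ x / (ε (1 - x ^ γ) + τ (1 - σ) x ^ γ)`. -/
def numerator (n : ℕ) (x : ℝ) : ℝ := ε * (σ - x) + x ^ n * powCoeff σ τ ε x

variable {σ τ ε}

theorem continuous_numerator (n : ℕ) : Continuous (numerator σ τ ε n) := by
  unfold numerator powCoeff
  fun_prop

theorem numerator_left_pos (n : ℕ) (hσ : 0 < σ) (hτ : 0 < τ) (hε : 0 ≤ ε) (hσε : σ < 1 - ε) :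
    0 < numerator σ τ ε n σ := by
  have h : numerator σ τ ε n σ = σ ^ n * (τ * (1 - σ) * (1 - ε - σ)) := by
    simp only [numerator, powCoeff]
    ring
  have hσ1 : 0 < 1 - σ := by linarith
  have hεσ : 0 < 1 - ε - σ := by linarith
  rw [h]
  positivity

theorem numerator_right_neg {n : ℕ} (hn : n ≠ 0) (hε : 0 < ε) (hε1 : ε < 1) (hσε : σ < 1 - ε) :
    numerator σ τ ε n (1 - ε) < 0 := by
  have h : numerator σ τ ε n (1 - ε) = ε * (σ - (1 - ε)) * (1 - (1 - ε) ^ n) := by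
    simp only [numerator, powCoeff]
    ring
  have hpow : (1 - ε) ^ n < 1 := pow_lt_one₀ (by linarith) (by linarith) hn
  rw [h]
  exact mul_neg_of_neg_of_pos (mul_neg_of_pos_of_neg hε (by linarith)) (by linarith)

theorem numerator_succ_of_eq_zero {n : ℕ} {x : ℝ} (h : numerator σ τ ε n x = 0) :
    numerator σ τ ε (n + 1) x = ε * (x - σ) * (x - 1) := by
  simp only [numerator] at h ⊢
  linear_combination x * h

theorem numerator_succ_neg {n : ℕ} {x : ℝ} (hε : 0 < ε) (hσx : σ < x) (hx1 : x < 1)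
    (h : numerator σ τ ε n x = 0) : numerator σ τ ε (n + 1) x < 0 := by
  rw [numerator_succ_of_eq_zero h]
  exact mul_neg_of_pos_of_neg (mul_pos hε (by linarith)) (by linarith)

theorem powCoeff_mem_Icc {x : ℝ} (hσ : 0 ≤ σ) (hτ : 0 ≤ τ) (hε : 0 ≤ ε) (hx : x ∈ Icc σ (1 - ε)) :
    powCoeff σ τ ε x ∈ Icc 0 (τ + ε) := by
  obtain ⟨hσx, hxε⟩ := hx
  have h1 : 0 ≤ (1 - σ) * (1 - ε - x) := mul_nonneg (by linarith) (by linarith)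
  have h2 : (1 - σ) * (1 - ε - x) ≤ 1 := by nlinarith
  unfold powCoeff
  constructor <;> nlinarith

theorem mul_sub_le_of_numerator_eq_zero {n : ℕ} {x : ℝ} (hσ : 0 ≤ σ) (hτ : 0 ≤ τ) (hε : 0 ≤ ε)
    (hx : x ∈ Icc σ (1 - ε)) (h : numerator σ τ ε n x = 0) :
    ε * (x - σ) ≤ (1 - ε) ^ n * (τ + ε) := by
  obtain ⟨hc0, hc⟩ := powCoeff_mem_Icc hσ hτ hε hx
  have hpow : x ^ n ≤ (1 - ε) ^ n := pow_le_pow_left₀ (hσ.trans hx.1) hx.2 n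
  calc ε * (x - σ) = x ^ n * powCoeff σ τ ε x := by simp only [numerator] at h; linarith
    _ ≤ (1 - ε) ^ n * (τ + ε) :=
      mul_le_mul hpow hc hc0 (pow_nonneg (hσ.trans (hx.1.trans hx.2)) n)

theorem div_sub_self_eq_zero_of_numerator_eq_zero {n : ℕ} {x : ℝ} (hε : 0 ≤ ε) (hτ : 0 < τ)
    (hσ : σ < 1) (hx0 : 0 < x) (hx1 : x ≤ 1) (h : numerator σ τ ε n x = 0) :
    (σ * ε * (1 - x ^ n) + τ * (1 - ε) * (1 - σ) * x ^ n) /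
      (ε * (1 - x ^ n) + τ * (1 - σ) * x ^ n) - x = 0 := by
  have hσ1 : 0 < 1 - σ := by linarith
  have hden : 0 < ε * (1 - x ^ n) + τ * (1 - σ) * x ^ n :=
    add_pos_of_nonneg_of_pos (mul_nonneg hε (sub_nonneg.2 (pow_le_one₀ hx0.le hx1))) (by positivity)
  rw [div_sub' hden.ne', div_eq_zero_iff]
  left
  simp only [numerator, powCoeff] at h
  linear_combination h

end MultigridRoot

open MultigridRoot

theorem stmt_16 (σ τ ε : ℝ) (hε : 0 < ε) (hετ : ε ≤ τ)
    (hσ0 : 0 < σ) (hσ1 : σ < 1 - ε)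
    (F : ℕ → ℝ → ℝ)
    (hF : ∀ γ : ℕ, ∀ x : ℝ, F γ x =
      (σ * ε * (1 - x ^ γ) + τ * (1 - ε) * (1 - σ) * x ^ γ) /
        (ε * (1 - x ^ γ) + τ * (1 - σ) * x ^ γ) - x) :
    ∃ x : ℕ → ℝ, StrictAnti x ∧ (∀ γ : ℕ, x γ ∈ Set.Ioo σ (1 - ε)) ∧
      Filter.Tendsto x Filter.atTop (nhds σ) ∧
      ∀ γ : ℕ, F (γ + 1) (x γ) = 0 := by
  have hτ : 0 < τ := hε.trans_le hετ
  have hε1 : ε < 1 := by linarith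
  choose x hx_mem hx_root hx_first using fun γ : ℕ =>
    exists_zero_lt_of_neg hσ1.le (continuous_numerator (γ + 1)).continuousOn
      (numerator_left_pos (γ + 1) hσ0 hτ hε.le hσ1) (numerator_right_neg γ.succ_ne_zero hε hε1 hσ1)
  have hx_lt_one : ∀ γ, x γ < 1 := fun γ => by linarith [(hx_mem γ).2]
  have hx_anti : StrictAnti x := strictAnti_nat_of_succ_lt fun γ =>
    hx_first (γ + 1) (x γ) (Ioo_subset_Icc_self (hx_mem γ))
      (numerator_succ_neg hε (hx_mem γ).1 (hx_lt_one γ) (hx_root γ))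
  have hx_le : ∀ γ, x γ ≤ σ + (1 - ε) ^ (γ + 1) * ((τ + ε) / ε) := fun γ => by
    have h := mul_sub_le_of_numerator_eq_zero hσ0.le hτ.le hε.le
      (Ioo_subset_Icc_self (hx_mem γ)) (hx_root γ)
    rw [← sub_le_iff_le_add', ← mul_div_assoc, le_div_iff₀ hε]
    linarith
  have hbound_lim : Tendsto (fun γ : ℕ => σ + (1 - ε) ^ (γ + 1) * ((τ + ε) / ε)) atTop (𝓝 σ) := by
    simpa using (((tendsto_pow_atTop_nhds_zero_of_lt_one (by linarith) (by linarith : 1 - ε < 1)).comp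
      (tendsto_add_atTop_nat 1)).mul_const ((τ + ε) / ε)).const_add σ
  refine ⟨x, hx_anti, hx_mem, tendsto_of_tendsto_of_tendsto_of_le_of_le tendsto_const_nhds hbound_lim
    (fun γ => (hx_mem γ).1.le) hx_le, fun γ => ?_⟩
  rw [hF]
  exact div_sub_self_eq_zero_of_numerator_eq_zero hε.le hτ (by linarith)
    (hσ0.trans (hx_mem γ).1) (hx_lt_one γ).le (hx_root γ)
end

section
/- Let σ, τ, ε be real numbers with 0 < ε ≤ τ and 0 < σ < 1 − ε, and define F₁(x) = [σε(1−x) + τ(1−ε)(1−σ)x]/[ε(1−x) + τ(1−σ)x] − x for 0 < x < 1. Set μ = 1 + σ − τ(1−ε)(1−σ)/ε and x₁ = 2σ / (μ + sqrt(μ² − 4σ(1 − (τ/ε)(1−σ)))). Then x₁ ∈ (σ, 1−ε) and F₁(x₁) = 0; in particular, when τ(1−σ) = ε one has x₁ = σ/(σ+ε). -/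
/-!
Clearing the denominator of `F₁` leaves `ε` times the quadratic
`q(x) = (1 - (τ/ε)(1-σ)) x² - μ x + σ`, and `x₁` is the root of `q` written in the form
`2c / (-b + √(b² - 4ac))`, which stays valid when the leading coefficient vanishes. Writing `D`
for the discriminant, `x₁ ∈ (σ, 1 - ε)` amounts to `2σ/(1-ε) < μ + √D < 2`, and both
inequalities follow from the identities
`D - (2σ/(1-ε) - μ)² = 4σε(1-ε-σ)/(1-ε)²` and `(2-μ)² - D = 4(τ/ε)(1-σ)(1-ε-σ)`.
When `τ(1-σ) = ε` the quadratic degenerates to `σ - (σ+ε)x`.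
-/

open Real

theorem quadratic_eq_zero_of_eq_div {K : Type*} [Field K] {a b c s x : K}
    (h : discrim a b c = s * s) (hs : s - b ≠ 0) (hx : x = 2 * c / (s - b)) :
    a * (x * x) + b * x + c = 0 := by
  have hxs : x * (s - b) = 2 * c := by rw [hx, div_mul_cancel₀ _ hs]
  have : (s - b) ^ 2 * (a * (x * x) + b * x + c) = 0 := by
    rw [discrim] at h
    linear_combination (a * (x * (s - b) + 2 * c) + b * (s - b)) * hxs - c * h
  simpa [hs] using this

theorem two_mul_div_mem_Ioo {σ ε m : ℝ} (hσ : 0 < σ) (hε : 0 < 1 - ε)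
    (hlo : 2 * σ / (1 - ε) < m) (hhi : m < 2) : 2 * σ / m ∈ Set.Ioo σ (1 - ε) := by
  have hm : 0 < m := (div_pos (by positivity) hε).trans hlo
  constructor
  · rw [lt_div_iff₀ hm]
    nlinarith
  · rwa [div_lt_iff₀ hm, ← div_lt_iff₀' hε]

section

variable {σ τ ε μ : ℝ}

theorem num_sub_mul_den_eq (hε : ε ≠ 0) (hμ : μ = 1 + σ - τ * (1 - ε) * (1 - σ) / ε) (x : ℝ) :
    σ * ε * (1 - x) + τ * (1 - ε) * (1 - σ) * x - (ε * (1 - x) + τ * (1 - σ) * x) * x =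
      ε * ((1 - τ / ε * (1 - σ)) * (x * x) + -μ * x + σ) := by
  rw [hμ]
  field_simp
  ring

theorem sq_two_mul_div_one_sub_sub_lt (hε : 0 < ε) (hσ0 : 0 < σ) (hσ1 : σ < 1 - ε)
    (hμ : μ = 1 + σ - τ * (1 - ε) * (1 - σ) / ε) :
    (2 * σ / (1 - ε) - μ) ^ 2 < μ ^ 2 - 4 * σ * (1 - τ / ε * (1 - σ)) := by
  have h1ε : 0 < 1 - ε := hσ0.trans hσ1
  have hgap : μ ^ 2 - 4 * σ * (1 - τ / ε * (1 - σ)) - (2 * σ / (1 - ε) - μ) ^ 2 =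
      4 * σ * ε * (1 - ε - σ) / (1 - ε) ^ 2 := by
    rw [hμ]
    field_simp
    ring
  have : 0 < 4 * σ * ε * (1 - ε - σ) / (1 - ε) ^ 2 := by
    have : 0 < 1 - ε - σ := by linarith
    positivity
  linarith

theorem sqrt_lt_two_sub (hε : 0 < ε) (hτ : 0 < τ) (hσ0 : 0 < σ) (hσ1 : σ < 1 - ε)
    (hμ : μ = 1 + σ - τ * (1 - ε) * (1 - σ) / ε) :
    √(μ ^ 2 - 4 * σ * (1 - τ / ε * (1 - σ))) < 2 - μ := by
  have h1σ : 0 < 1 - σ := by linarith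
  have h1ε : 0 < 1 - ε := hσ0.trans hσ1
  have hμ2 : 0 < 2 - μ := by
    have : 0 < τ * (1 - ε) * (1 - σ) / ε := by positivity
    linarith
  have hgap : (2 - μ) ^ 2 - (μ ^ 2 - 4 * σ * (1 - τ / ε * (1 - σ))) =
      4 * (τ * (1 - σ) / ε) * (1 - ε - σ) := by
    rw [hμ]
    field_simp
    ring
  have : 0 < 4 * (τ * (1 - σ) / ε) * (1 - ε - σ) := by
    have : 0 < 1 - ε - σ := by linarith
    positivity
  exact (sqrt_lt' hμ2).2 (by linarith)

end

theorem stmt_17 (σ τ ε : ℝ) (hε : 0 < ε) (hετ : ε ≤ τ)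
    (hσ0 : 0 < σ) (hσ1 : σ < 1 - ε)
    (F₁ : ℝ → ℝ)
    (hF₁ : ∀ x : ℝ, F₁ x =
      (σ * ε * (1 - x) + τ * (1 - ε) * (1 - σ) * x) /
        (ε * (1 - x) + τ * (1 - σ) * x) - x)
    (μ : ℝ) (hμ : μ = 1 + σ - τ * (1 - ε) * (1 - σ) / ε)
    (x₁ : ℝ)
    (hx₁ : x₁ = 2 * σ /
      (μ + Real.sqrt (μ ^ 2 - 4 * σ * (1 - τ / ε * (1 - σ))))) :
    x₁ ∈ Set.Ioo σ (1 - ε) ∧ F₁ x₁ = 0 ∧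
      (τ * (1 - σ) = ε → x₁ = σ / (σ + ε)) := by
  have hgap := sq_two_mul_div_one_sub_sub_lt hε hσ0 hσ1 hμ
  have hD := (sq_nonneg _).trans hgap.le
  have hlower := lt_sqrt_of_sq_lt hgap
  have hupper := sqrt_lt_two_sub hε (hε.trans_le hετ) hσ0 hσ1 hμ
  set s := √(μ ^ 2 - 4 * σ * (1 - τ / ε * (1 - σ)))
  have hmem : x₁ ∈ Set.Ioo σ (1 - ε) :=
    hx₁ ▸ two_mul_div_mem_Ioo hσ0 (hσ0.trans hσ1) (by linarith) (by linarith)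
  have hroot : (1 - τ / ε * (1 - σ)) * (x₁ * x₁) + -μ * x₁ + σ = 0 := by
    refine quadratic_eq_zero_of_eq_div (s := s) ?_ ?_ (by rw [hx₁, sub_neg_eq_add, add_comm])
    · rw [discrim, mul_self_sqrt hD]
      ring
    · have : 0 < 2 * σ / (1 - ε) := div_pos (by positivity) (hσ0.trans hσ1)
      linarith
  refine ⟨hmem, ?_, fun hτσ => ?_⟩
  · have hden : 0 < ε * (1 - x₁) + τ * (1 - σ) * x₁ := by
      have := hε.trans_le hετ
      have : 0 < 1 - σ := by linarith
      have : 0 < x₁ := hσ0.trans hmem.1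
      have : 0 < 1 - x₁ := by linarith [hmem.2]
      positivity
    rw [hF₁, div_sub' hden.ne', num_sub_mul_den_eq hε.ne' hμ, hroot, mul_zero, zero_div]
  · have ha : 1 - τ / ε * (1 - σ) = 0 := by
      rw [div_mul_eq_mul_div, hτσ, div_self hε.ne', sub_self]
    have hμσε : μ = σ + ε := by
      rw [hμ, mul_right_comm, hτσ, mul_div_cancel_left₀ _ hε.ne']
      ring
    rw [ha, hμσε] at hroot
    rw [eq_div_iff (by positivity)]
    linarith
end

section
/- Let σ, τ, ε be real numbers with 0 < ε ≤ τ and 0 < σ < 1 − ε, let F_γ(x) = [σε(1−x^γ) + τ(1−ε)(1−σ)x^γ]/[ε(1−x^γ) + τ(1−σ)x^γ] − x, and let x₁ ∈ (σ, 1−ε) be a root of F₁. Then there exists a root x₂ ∈ (σ, x₁) of F₂ satisfying x₂ < [σε(1−x₁²) + τ(1−ε)(1−σ)x₁²]/[ε(1−x₁²) + τ(1−σ)x₁²]; moreover, if τ(1−σ) = ε, then x₂ = 2σ/(1 + sqrt(1 − 4σ(1−σ−ε))) is a root of F₂ in (σ, x₁). -/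
/-!
Write `F_γ x = G (x ^ γ) - x`, where `G` is a Möbius map that increases strictly on `[0, 1]` from
`G 0 = σ`. Then `x ↦ G (x²) - x` is positive at `σ` (as `G (σ²) > G 0`) and negative at `x₁`
(as `G (x₁²) < G x₁ = x₁`), so it vanishes at some `x₂ ∈ (σ, x₁)`, and `x₂ = G (x₂²) < G (x₁²)`.
When `τ (1 - σ) = ε` the denominator of `G` is constant, `G y = σ + (1 - σ - ε) y`, and `F₂ x = 0`
is a quadratic equation whose smaller root is the stated closed form.
-/

open Set

noncomputable def interpolRatio (a b c d y : ℝ) : ℝ :=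
  (a * (1 - y) + b * y) / (c * (1 - y) + d * y)

section InterpolRatio

variable {a b c d : ℝ}

theorem interpolRatio_zero : interpolRatio a b c d 0 = a / c := by
  simp [interpolRatio]

theorem interpolRatio_of_eq (hc : c ≠ 0) (y : ℝ) :
    interpolRatio a b c c y = a / c + (b - a) / c * y := by
  unfold interpolRatio
  field_simp
  ring

theorem interpolRatio_denom_pos (hc : 0 < c) (hd : 0 < d) {y : ℝ} (hy : y ∈ Icc 0 1) :
    0 < c * (1 - y) + d * y := by
  obtain ⟨hy0, hy1⟩ := hy
  rcases hy1.lt_or_eq with hy1 | rfl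
  · nlinarith [mul_pos hc (sub_pos.2 hy1)]
  · linarith

theorem continuousOn_interpolRatio (hc : 0 < c) (hd : 0 < d) :
    ContinuousOn (interpolRatio a b c d) (Icc 0 1) :=
  ContinuousOn.div (by fun_prop) (by fun_prop) fun _ hy ↦
    (interpolRatio_denom_pos hc hd hy).ne'

theorem strictMonoOn_interpolRatio (hc : 0 < c) (hd : 0 < d) (h : a * d < b * c) :
    StrictMonoOn (interpolRatio a b c d) (Icc 0 1) := by
  intro y hy y' hy' hlt
  rw [interpolRatio, interpolRatio,
    div_lt_div_iff₀ (interpolRatio_denom_pos hc hd hy) (interpolRatio_denom_pos hc hd hy')]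
  nlinarith [mul_pos (sub_pos.2 h) (sub_pos.2 hlt)]

end InterpolRatio

theorem exists_mem_Ioo_apply_sq_eq {G : ℝ → ℝ} (hmono : StrictMonoOn G (Icc 0 1))
    (hcont : ContinuousOn G (Icc 0 1)) {σ x₁ : ℝ} (hσ : 0 < σ) (hσx₁ : σ < x₁) (hx₁ : x₁ < 1)
    (hG0 : G 0 = σ) (hfix : G x₁ = x₁) :
    ∃ x₂ ∈ Ioo σ x₁, G (x₂ ^ 2) = x₂ ∧ x₂ < G (x₁ ^ 2) := by
  have hx₁0 : 0 < x₁ := hσ.trans hσx₁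
  have hsq : MapsTo (· ^ 2) (Icc σ x₁) (Icc 0 1) := fun x hx ↦
    ⟨sq_nonneg x, pow_le_one₀ (hσ.le.trans hx.1) (hx.2.trans hx₁.le)⟩
  have hcont' : ContinuousOn (fun x ↦ G (x ^ 2) - x) (Icc σ x₁) :=
    (hcont.comp (continuous_pow 2).continuousOn hsq).sub continuousOn_id
  have hpos : 0 < G (σ ^ 2) - σ := by
    have := hmono ⟨le_rfl, zero_le_one⟩ (hsq ⟨le_rfl, hσx₁.le⟩) (pow_pos hσ 2)
    linarith
  have hneg : G (x₁ ^ 2) - x₁ < 0 := by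
    have := hmono (hsq ⟨hσx₁.le, le_rfl⟩) ⟨hx₁0.le, hx₁.le⟩ (pow_lt_self_of_lt_one₀ hx₁0 hx₁ one_lt_two)
    linarith
  obtain ⟨x₂, hx₂, heq⟩ := intermediate_value_Ioo' hσx₁.le hcont' ⟨hneg, hpos⟩
  have hfix₂ : G (x₂ ^ 2) = x₂ := sub_eq_zero.1 heq
  refine ⟨x₂, hx₂, hfix₂, ?_⟩
  calc x₂ = G (x₂ ^ 2) := hfix₂.symm
    _ < G (x₁ ^ 2) := hmono (hsq (Ioo_subset_Icc_self hx₂)) (hsq ⟨hσx₁.le, le_rfl⟩)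
        (pow_lt_pow_left₀ hx₂.2 (hσ.trans hx₂.1).le two_ne_zero)

section Quadratic

variable {σ κ : ℝ}

theorem add_mul_sq_two_mul_div_one_add_sqrt (hdisc : 0 ≤ 1 - 4 * σ * κ) :
    σ + κ * (2 * σ / (1 + √(1 - 4 * σ * κ))) ^ 2 = 2 * σ / (1 + √(1 - 4 * σ * κ)) := by
  have hs := Real.sq_sqrt hdisc
  have hs0 := Real.sqrt_nonneg (1 - 4 * σ * κ)
  generalize √(1 - 4 * σ * κ) = s at hs hs0 ⊢
  have h1s : 0 < 1 + s := by linarith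
  field_simp
  linear_combination σ * hs

theorem two_mul_div_one_add_sqrt_mem_Ioo (hσ : 0 < σ) (hκ : 0 < κ) (hσκ : σ + κ < 1) {x : ℝ}
    (hx : σ + κ * x = x) : 2 * σ / (1 + √(1 - 4 * σ * κ)) ∈ Ioo σ x := by
  have hdisc : 0 ≤ 1 - 4 * σ * κ := by nlinarith [sq_nonneg (σ - κ)]
  set s := √(1 - 4 * σ * κ)
  have hs : s ^ 2 = 1 - 4 * σ * κ := Real.sq_sqrt hdisc
  have hs0 : 0 ≤ s := Real.sqrt_nonneg _
  have hs1 : s < 1 := by nlinarith [mul_pos hσ hκ]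
  have hx0 : 0 < x := by nlinarith
  -- `s ^ 2 - (1 - 2κ) ^ 2 = 4κ (1 - σ - κ) > 0`
  have hκs : 1 - 2 * κ < s := by nlinarith [mul_pos hκ (sub_pos.2 hσκ)]
  constructor
  · rw [lt_div_iff₀ (by positivity)]
    nlinarith
  · rw [div_lt_iff₀ (by positivity)]
    nlinarith [mul_pos hx0 (show 0 < s - (1 - 2 * κ) by linarith)]

end Quadratic

theorem stmt_18 (σ τ ε : ℝ) (hε : 0 < ε) (hετ : ε ≤ τ)
    (hσ0 : 0 < σ) (hσ1 : σ < 1 - ε)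
    (F : ℕ → ℝ → ℝ)
    (hF : ∀ γ : ℕ, ∀ x : ℝ, F γ x =
      (σ * ε * (1 - x ^ γ) + τ * (1 - ε) * (1 - σ) * x ^ γ) /
        (ε * (1 - x ^ γ) + τ * (1 - σ) * x ^ γ) - x)
    (x₁ : ℝ) (hx₁ : x₁ ∈ Set.Ioo σ (1 - ε)) (hroot₁ : F 1 x₁ = 0) :
    (∃ x₂ ∈ Set.Ioo σ x₁, F 2 x₂ = 0 ∧
      x₂ < (σ * ε * (1 - x₁ ^ 2) + τ * (1 - ε) * (1 - σ) * x₁ ^ 2) /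
        (ε * (1 - x₁ ^ 2) + τ * (1 - σ) * x₁ ^ 2)) ∧
    (τ * (1 - σ) = ε →
      F 2 (2 * σ / (1 + Real.sqrt (1 - 4 * σ * (1 - σ - ε)))) = 0 ∧
        2 * σ / (1 + Real.sqrt (1 - 4 * σ * (1 - σ - ε))) ∈ Set.Ioo σ x₁) := by
  set G := interpolRatio (σ * ε) (τ * (1 - ε) * (1 - σ)) ε (τ * (1 - σ))
  have hFG : ∀ γ x, F γ x = G (x ^ γ) - x := hF
  have hfix : G x₁ = x₁ := by linarith [pow_one x₁ ▸ hFG 1 x₁]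
  refine ⟨?_, fun h ↦ ?_⟩
  · have hd : 0 < τ * (1 - σ) := mul_pos (hε.trans_le hετ) (by linarith)
    have hmono : StrictMonoOn G (Icc 0 1) :=
      strictMonoOn_interpolRatio hε hd (by nlinarith [mul_pos (mul_pos hε hd) (sub_pos.2 hσ1)])
    have hG0 : G 0 = σ := interpolRatio_zero.trans (mul_div_cancel_right₀ _ hε.ne')
    obtain ⟨x₂, hx₂, heq, hlt⟩ := exists_mem_Ioo_apply_sq_eq hmono
      (continuousOn_interpolRatio hε hd) hσ0 hx₁.1 (by linarith [hx₁.2]) hG0 hfix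
    exact ⟨x₂, hx₂, by rw [hFG, heq, sub_self], hlt⟩
  · have haff : ∀ y, G y = σ + (1 - σ - ε) * y := fun y ↦ by
      simp only [G]
      rw [h, interpolRatio_of_eq hε.ne']
      field_simp
      linear_combination (1 - ε) * y * h
    have hdisc : 0 ≤ 1 - 4 * σ * (1 - σ - ε) := by nlinarith [sq_nonneg (2 * σ + ε - 1)]
    refine ⟨?_, two_mul_div_one_add_sqrt_mem_Ioo hσ0 (by linarith) (by linarith) ?_⟩
    · rw [hFG, haff, add_mul_sq_two_mul_div_one_add_sqrt hdisc, sub_self]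
    · rw [← haff, hfix]
end
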